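/- arXiv:2511.20118 — 3 statements merged into one kernel-verified Lean document; each statement's English description precedes it below -/
import Mathlib

section
/- Kolmogorov extension theorem: Let T be an index set and for each t ∈ T let E_t be a second-countable, complete pseudo-extended-metric space equipped with its Borel σ-algebra. Let (P_J)_{J ⊆ T finite} be a projective family of finite measures, i.e. P_J is a finite measure on the product space ∏_{j∈J} E_j and for all finite H ⊆ J ⊆ T the pushforward of P_J under the restriction map π_H^J : ∏_{j∈J} E_j → ∏_{h∈H} E_h equals P_H. Then there exists a unique finite measure P on ∏_{t∈T} E_t, defined on the σ-algebra generated by the finite-coordinate projections (the product σ-algebra), such that for every finite J ⊆ T the pushforward of P under the projection π_J equals P_J. -/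
open MeasureTheory Set Filter Topology
open scoped ENNReal

namespace KolmogorovAux

section Regularity

variable {X : Type*} [PseudoEMetricSpace X] [CompleteSpace X] [SecondCountableTopology X]
  [MeasurableSpace X] [BorelSpace X] (μ : Measure X) [IsFiniteMeasure μ]

lemma exists_isCompact_isClosed_compl_le {ε : ℝ≥0∞} (hε : ε ≠ 0) :
    ∃ K : Set X, IsCompact K ∧ IsClosed K ∧ μ Kᶜ ≤ ε := by
  cases isEmpty_or_nonempty X with
  | inl h =>
    refine ⟨∅, isCompact_empty, isClosed_empty, ?_⟩
    simp [μ.eq_zero_of_isEmpty]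
  | inr h =>
    obtain ⟨δ, δpos, hδsum⟩ := ENNReal.exists_pos_sum_of_countable' hε ℕ
    set x : ℕ → X := TopologicalSpace.denseSeq X with hxdef
    have hx : DenseRange x := TopologicalSpace.denseRange_denseSeq X
    set r : ℕ → ℝ≥0∞ := fun n => ((n : ℝ≥0∞) + 1)⁻¹ with hr
    have hrpos : ∀ n, 0 < r n := fun n => ENNReal.inv_pos.mpr (by simp)
    set B : ℕ → ℕ → Set X := fun n m => ⋃ i ∈ Finset.range m, EMetric.closedBall (x i) (r n)
      with hB
    have hball : ∀ (z : X) (R : ℝ≥0∞), IsClosed (EMetric.closedBall z R) := fun z R =>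
      isClosed_le (continuous_id.edist continuous_const) continuous_const
    have hBclosed : ∀ n m, IsClosed (B n m) := fun n m =>
      (Finset.range m).finite_toSet.isClosed_biUnion fun i _ => hball _ _
    have key : ∀ n, ∃ m, μ (B n m)ᶜ ≤ δ n := by
      intro n
      have h2 : ⋂ m, (B n m)ᶜ = ∅ := by
        rw [← compl_iUnion, compl_empty_iff]
        refine eq_univ_of_forall fun y => ?_
        obtain ⟨z, hz, hyz⟩ := EMetric.mem_closure_iff.mp (hx y) (r n) (hrpos n)
        obtain ⟨i, rfl⟩ := hz
        exact mem_iUnion.mpr ⟨i + 1, mem_biUnion (Finset.self_mem_range_succ i) hyz.le⟩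
      have h1 : Tendsto (fun m => μ (B n m)ᶜ) atTop (𝓝 (μ (⋂ m, (B n m)ᶜ))) := by
        refine tendsto_measure_iInter_atTop
          (fun m => ((hBclosed n m).measurableSet.compl).nullMeasurableSet)
          (fun a b hab => compl_subset_compl.mpr ?_) ⟨0, measure_ne_top _ _⟩
        exact biUnion_subset_biUnion_left (by exact_mod_cast Finset.range_subset_range.mpr hab)
      rw [h2] at h1
      simp only [measure_empty] at h1
      exact ((h1.eventually_le_const (δpos n)).exists).imp fun m hm => hm
    choose m hm using key
    refine ⟨⋂ n, B n (m n), ?_, isClosed_iInter fun n => hBclosed _ _, ?_⟩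
    · refine TotallyBounded.isCompact_of_isClosed ?_ (isClosed_iInter fun n => hBclosed _ _)
      rw [EMetric.totallyBounded_iff]
      intro ε' hε'
      obtain ⟨n, hn⟩ := ENNReal.exists_inv_nat_lt (ne_of_gt hε')
      refine ⟨x '' (Finset.range (m n)), ((Finset.range (m n)).finite_toSet.image x), ?_⟩
      intro y hy
      have hyB : y ∈ B n (m n) := mem_iInter.mp hy n
      simp only [hB, mem_iUnion, exists_prop] at hyB
      obtain ⟨i, hi, hyi⟩ := hyB
      have hrn : r n < ε' := by
        refine lt_of_le_of_lt ?_ hn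
        rw [hr]
        exact ENNReal.inv_le_inv' (by exact_mod_cast Nat.le_succ n)
      refine mem_biUnion (mem_image_of_mem x hi) ?_
      exact lt_of_le_of_lt (EMetric.mem_closedBall.mp hyi) hrn
    · calc μ (⋂ n, B n (m n))ᶜ = μ (⋃ n, (B n (m n))ᶜ) := by rw [compl_iInter]
        _ ≤ ∑' n, μ (B n (m n))ᶜ := measure_iUnion_le _
        _ ≤ ∑' n, δ n := ENNReal.tsum_le_tsum hm
        _ ≤ ε := hδsum.le

lemma exists_isCompact_isClosed_diff_le {S : Set X} (hS : MeasurableSet S)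
    {ε : ℝ≥0∞} (hε : ε ≠ 0) :
    ∃ K, K ⊆ S ∧ IsCompact K ∧ IsClosed K ∧ μ (S \ K) ≤ ε := by
  have hε2 : ε / 2 ≠ 0 := by
    simp [ENNReal.div_eq_zero_iff, hε]
  obtain ⟨F, hFS, hFclosed, hF⟩ := hS.exists_isClosed_diff_lt (measure_ne_top μ S) hε2
  obtain ⟨K', hK'comp, hK'closed, hK'⟩ := exists_isCompact_isClosed_compl_le μ hε2
  refine ⟨F ∩ K', inter_subset_left.trans hFS,
    hK'comp.of_isClosed_subset (hFclosed.inter hK'closed) inter_subset_right,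
    hFclosed.inter hK'closed, ?_⟩
  have : S \ (F ∩ K') ⊆ (S \ F) ∪ K'ᶜ := by
    intro y hy
    by_cases hyK : y ∈ K'
    · exact Or.inl ⟨hy.1, fun hyF => hy.2 ⟨hyF, hyK⟩⟩
    · exact Or.inr hyK
  calc μ (S \ (F ∩ K')) ≤ μ ((S \ F) ∪ K'ᶜ) := measure_mono this
    _ ≤ μ (S \ F) + μ K'ᶜ := measure_union_le _ _
    _ ≤ ε / 2 + ε / 2 := add_le_add hF.le hK'
    _ = ε := ENNReal.add_halves ε

end Regularity


section Content

variable {T : Type*} {E : T → Type*} [∀ t, MeasurableSpace (E t)]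
  {P : (J : Finset T) → Measure (∀ j : J, E j)}

open scoped Classical in
/-- The Kolmogorov content on measurable cylinders. -/
noncomputable def kc (P : (J : Finset T) → Measure (∀ j : J, E j)) :
    Set (∀ t, E t) → ℝ≥0∞ := fun s =>
  if hs : s ∈ measurableCylinders E then
    P (measurableCylinders.finset hs) (measurableCylinders.set hs)
  else 0

variable (hP : IsProjectiveMeasureFamily P)
include hP

lemma kc_congr {s : Set (∀ t, E t)} (hs : s ∈ measurableCylinders E)
    {J : Finset T} {S : Set (∀ j : J, E j)} (heq : s = cylinder J S) (hS : MeasurableSet S) :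
    kc P s = P J S := by
  classical
  rw [kc, dif_pos hs]
  exact hP.congr_cylinder (measurableCylinders.measurableSet hs) hS
    (by rw [← measurableCylinders.eq_cylinder hs, ← heq])

lemma kc_cylinder {J : Finset T} {S : Set (∀ j : J, E j)} (hS : MeasurableSet S) :
    kc P (cylinder J S) = P J S :=
  kc_congr hP (cylinder_mem_measurableCylinders _ _ hS) rfl hS

end Content

section Cyl

variable {T : Type*} {E : T → Type*}

lemma cylinder_restrict₂ {I K : Finset T} (h : I ⊆ K) (S : Set (∀ i : I, E i)) :
    cylinder K (Finset.restrict₂ h ⁻¹' S) = cylinder I S := by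
  rw [cylinder, cylinder, ← Set.preimage_comp, Finset.restrict₂_comp_restrict]

variable [Nonempty (∀ t, E t)]

open scoped Classical in
/-- Extend a partially defined point to the whole product. -/
noncomputable def extp (J : Finset T) (p : ∀ j : J, E j) : ∀ t, E t := fun t =>
  if h : t ∈ J then p ⟨t, h⟩ else Classical.arbitrary (∀ t, E t) t

lemma restrict_extp (J : Finset T) (p : ∀ j : J, E j) : J.restrict (extp J p) = p :=
  by classical exact funext fun j => dif_pos j.2

lemma subset_of_cylinder_subset {J : Finset T} {S U : Set (∀ j : J, E j)}
    (h : cylinder J S ⊆ cylinder J U) : S ⊆ U := by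
  intro p hp
  have hmem : extp J p ∈ cylinder J S := by
    rw [mem_cylinder, restrict_extp]; exact hp
  have := h hmem
  rwa [mem_cylinder, restrict_extp] at this

end Cyl

section Add

variable {T : Type*} {E : T → Type*} [∀ t, MeasurableSpace (E t)]
  {P : (J : Finset T) → Measure (∀ j : J, E j)} [Nonempty (∀ t, E t)]

variable (hP : IsProjectiveMeasureFamily P)
include hP

lemma kc_union {s t : Set (∀ t, E t)} (hs : s ∈ measurableCylinders E)
    (ht : t ∈ measurableCylinders E) (hdisj : Disjoint s t) :
    kc P (s ∪ t) = kc P s + kc P t := by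
  classical
  obtain ⟨I, S, hS, rfl⟩ := (mem_measurableCylinders _).mp hs
  obtain ⟨J, U, hU, rfl⟩ := (mem_measurableCylinders _).mp ht
  rw [union_cylinder]
  have hS' : MeasurableSet (Finset.restrict₂ (Finset.subset_union_left (s₂ := J)) ⁻¹' S) :=
    (Finset.measurable_restrict₂ _) hS
  have hU' : MeasurableSet (Finset.restrict₂ (Finset.subset_union_right (s₁ := I)) ⁻¹' U) :=
    (Finset.measurable_restrict₂ _) hU
  rw [kc_cylinder hP (hS'.union hU'),
    measure_union (disjoint_cylinder_iff.mp hdisj) hU',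
    ← kc_cylinder hP (J := I ∪ J) hS', ← kc_cylinder hP (J := I ∪ J) hU',
    cylinder_restrict₂, cylinder_restrict₂]

lemma kc_mono {s t : Set (∀ t, E t)} (hs : s ∈ measurableCylinders E)
    (ht : t ∈ measurableCylinders E) (hsub : s ⊆ t) :
    kc P s ≤ kc P t := by
  have hd : t = s ∪ (t \ s) := (Set.union_diff_cancel hsub).symm
  rw [hd, kc_union hP hs (diff_mem_measurableCylinders ht hs) disjoint_sdiff_self_right]
  exact le_self_add

lemma kc_ne_top [∀ J, IsFiniteMeasure (P J)] {s : Set (∀ t, E t)}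
    (hs : s ∈ measurableCylinders E) : kc P s ≠ ∞ := by
  refine ne_top_of_le_ne_top ?_ (kc_mono hP hs (univ_mem_measurableCylinders E) (subset_univ s))
  have : (univ : Set (∀ t, E t)) = cylinder (∅ : Finset T) univ := by simp
  rw [this, kc_cylinder hP MeasurableSet.univ]
  exact measure_ne_top _ _

omit [Nonempty (∀ t, E t)] in
lemma kc_empty : kc P (∅ : Set (∀ t, E t)) = 0 := by
  have : (∅ : Set (∀ t, E t)) = cylinder (∅ : Finset T) ∅ := by simp
  rw [this, kc_cylinder hP MeasurableSet.empty, measure_empty]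

end Add

section Continuity

variable {T : Type*} {E : T → Type*} [∀ t, MeasurableSpace (E t)]
  [∀ t, PseudoEMetricSpace (E t)] [∀ t, CompleteSpace (E t)]
  [∀ t, SecondCountableTopology (E t)] [∀ t, BorelSpace (E t)]
  {P : (J : Finset T) → Measure (∀ j : J, E j)} [∀ J, IsFiniteMeasure (P J)]
  [Nonempty (∀ t, E t)]

variable (hP : IsProjectiveMeasureFamily P)
include hP

lemma kc_tendsto_zero (A : ℕ → Set (∀ t, E t)) (hA : ∀ n, A n ∈ measurableCylinders E)
    (hanti : Antitone A) (hinter : ⋂ n, A n = ∅) :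
    Tendsto (fun n => kc P (A n)) atTop (𝓝 0) := by
  classical
  have hmono : Antitone fun n => kc P (A n) := fun a b h => kc_mono hP (hA b) (hA a) (hanti h)
  have hlim := tendsto_atTop_iInf hmono
  suffices h0 : (⨅ n, kc P (A n)) = 0 by rwa [h0] at hlim
  by_contra hε
  set ε := ⨅ n, kc P (A n) with hεdef
  have hεle : ∀ n, ε ≤ kc P (A n) := fun n => iInf_le _ n
  have hεtop : ε ≠ ∞ := ne_top_of_le_ne_top (kc_ne_top hP (hA 0)) (hεle 0)
  -- choose representations
  choose J' S' hS' hAeq using fun n => (mem_measurableCylinders _).mp (hA n)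
  set J : ℕ → Finset T := fun n => (Finset.range (n + 1)).sup J' with hJdef
  have hJmono : Monotone J := fun a b hab =>
    Finset.sup_mono (Finset.range_subset_range.mpr (by omega))
  have hJ' : ∀ n, J' n ⊆ J n := fun n =>
    Finset.le_sup (Finset.self_mem_range_succ n)
  set S : (n : ℕ) → Set (∀ j : J n, E j) := fun n => Finset.restrict₂ (hJ' n) ⁻¹' (S' n) with hSdef
  have hSmeas : ∀ n, MeasurableSet (S n) := fun n => (Finset.measurable_restrict₂ _) (hS' n)
  have hAeq' : ∀ n, A n = cylinder (J n) (S n) := fun n => by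
    rw [hSdef, cylinder_restrict₂, ← hAeq n]
  -- base inclusions
  have hSsub : ∀ {k n : ℕ} (h : k ≤ n), S n ⊆ Finset.restrict₂ (hJmono h) ⁻¹' S k := by
    intro k n h
    refine subset_of_cylinder_subset ?_
    rw [cylinder_restrict₂ (hJmono h), ← hAeq' n, ← hAeq' k]
    exact hanti h
  -- compact approximations
  obtain ⟨δ, δpos, hδsum⟩ := ENNReal.exists_pos_sum_of_countable' hε ℕ
  have hreg := fun n => exists_isCompact_isClosed_diff_le (P (J n)) (hSmeas n)
    (δpos n).ne'
  choose K hKsub hKcomp hKclosed hKle using hreg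
  have hKmeas : ∀ n, MeasurableSet (K n) := fun n => (hKclosed n).measurableSet
  -- the intersections
  set D : (n : ℕ) → Set (∀ j : J n, E j) :=
    fun n => ⋂ k, ⋂ (h : k ≤ n), Finset.restrict₂ (hJmono h) ⁻¹' K k with hDdef
  have hDmeas : ∀ n, MeasurableSet (D n) := fun n =>
    MeasurableSet.iInter fun k => MeasurableSet.iInter fun h =>
      (Finset.measurable_restrict₂ _) (hKmeas k)
  -- measure of S n \ D n is small
  have hdiff : ∀ n, P (J n) (S n \ D n) ≤ ∑' k, δ k := by
    intro n
    have hsub2 : S n \ D n ⊆ ⋃ k, ⋃ (h : k ≤ n), Finset.restrict₂ (hJmono h) ⁻¹' (S k \ K k) := by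
      intro p hp
      obtain ⟨hpS, hpD⟩ := hp
      simp only [hDdef, mem_iInter, not_forall] at hpD
      obtain ⟨k, hk, hpk⟩ := hpD
      exact mem_iUnion.mpr ⟨k, mem_iUnion.mpr ⟨hk, ⟨hSsub hk hpS, hpk⟩⟩⟩
    calc P (J n) (S n \ D n)
        ≤ ∑' k, P (J n) (⋃ (h : k ≤ n), Finset.restrict₂ (hJmono h) ⁻¹' (S k \ K k)) :=
          (measure_mono hsub2).trans (measure_iUnion_le _)
      _ ≤ ∑' k, δ k := by
          refine ENNReal.tsum_le_tsum fun k => ?_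
          by_cases hk : k ≤ n
          · have hle1 : (⋃ (h : k ≤ n), Finset.restrict₂ (hJmono h) ⁻¹' (S k \ K k))
                ⊆ Finset.restrict₂ (hJmono hk) ⁻¹' (S k \ K k) :=
              iUnion_subset fun _ => subset_rfl
            refine (measure_mono hle1).trans ?_
            have hPk : P (J n) (Finset.restrict₂ (hJmono hk) ⁻¹' (S k \ K k))
                = P (J k) (S k \ K k) := by
              rw [hP (J n) (J k) (hJmono hk),
                Measure.map_apply (Finset.measurable_restrict₂ _)
                  ((hSmeas k).diff (hKmeas k))]
            rw [hPk]
            exact hKle k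
          · have hle1 : (⋃ (h : k ≤ n), Finset.restrict₂ (hJmono h) ⁻¹' (S k \ K k))
                ⊆ (∅ : Set _) := iUnion_subset fun h => absurd h hk
            exact (measure_mono hle1).trans (by simp)
  have hδε : ∑' k, δ k < ε := hδsum
  -- D n has positive measure, hence nonempty
  have hDpos : ∀ n, P (J n) (D n) ≠ 0 := by
    intro n h0
    have h1 : ε ≤ kc P (A n) := hεle n
    rw [hAeq' n, kc_cylinder hP (hSmeas n)] at h1
    have h2 : P (J n) (S n) ≤ P (J n) (D n) + P (J n) (S n \ D n) := by
      refine (measure_mono ?_).trans (measure_union_le _ _)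
      intro p hp
      by_cases hpD : p ∈ D n
      · exact Or.inl hpD
      · exact Or.inr ⟨hp, hpD⟩
    rw [h0, zero_add] at h2
    exact absurd (h1.trans (h2.trans (hdiff n))) (not_le.mpr hδε)
  have hDne : ∀ n, (D n).Nonempty := fun n => nonempty_of_measure_ne_zero (hDpos n)
  choose p hp using hDne
  -- the approximating sequence
  set x : ℕ → ∀ t, E t := fun n => extp (J n) (p n) with hxdef
  have hpK : ∀ {k n : ℕ} (h : k ≤ n), Finset.restrict₂ (hJmono h) (p n) ∈ K k := by
    intro k n h
    have := hp n
    rw [hDdef] at this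
    simp only [mem_iInter] at this
    exact this k h
  have hxK : ∀ {k n : ℕ} (h : k ≤ n), (J k).restrict (x n) ∈ K k := by
    intro k n h
    have h1 : (J k).restrict (x n) = Finset.restrict₂ (hJmono h) ((J n).restrict (x n)) := by
      rw [← Function.comp_apply (f := Finset.restrict₂ (hJmono h)),
        Finset.restrict₂_comp_restrict]
    rw [h1, restrict_extp]
    exact hpK h
  -- compact product trap
  set Q : ∀ t, Set (E t) := fun t =>
    if h : ∃ k, t ∈ J k then
      (fun q : ∀ j : J (Nat.find h), E j => q ⟨t, Nat.find_spec h⟩) '' K (Nat.find h)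
        ∪ {Classical.arbitrary (∀ t, E t) t}
    else {Classical.arbitrary (∀ t, E t) t} with hQdef
  have hQcomp : ∀ t, IsCompact (Q t) := by
    intro t
    simp only [hQdef]
    by_cases h : ∃ k, t ∈ J k
    · rw [dif_pos h]
      exact ((hKcomp _).image (continuous_apply _)).union isCompact_singleton
    · rw [dif_neg h]
      exact isCompact_singleton
  have hxQ : ∀ n, x n ∈ univ.pi Q := by
    intro n
    rw [mem_univ_pi]
    intro t
    by_cases ht : t ∈ J n
    · have hex : ∃ k, t ∈ J k := ⟨n, ht⟩
      have hfind : Nat.find hex ≤ n := Nat.find_le ht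
      simp only [hQdef]
      rw [dif_pos hex]
      left
      exact ⟨(J (Nat.find hex)).restrict (x n), hxK hfind, rfl⟩
    · have hxt : x n t = Classical.arbitrary (∀ t, E t) t := by
        rw [hxdef]; exact dif_neg ht
      simp only [hQdef]
      by_cases h : ∃ k, t ∈ J k
      · rw [dif_pos h]; right; rw [hxt]; rfl
      · rw [dif_neg h]; rw [hxt]; rfl
  -- cluster point
  have hle : Filter.map x atTop ≤ 𝓟 (univ.pi Q) :=
    le_principal_iff.mpr (eventually_map.mpr (Eventually.of_forall hxQ))
  obtain ⟨z, -, hz⟩ := (isCompact_univ_pi hQcomp).exists_clusterPt hle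
  have hzB : ∀ k, z ∈ cylinder (J k) (K k) := by
    intro k
    have hclosed : IsClosed (cylinder (J k) (K k)) := MeasureTheory.IsClosed.cylinder (J k) (hKclosed k)
    have hmem : cylinder (J k) (K k) ∈ Filter.map x atTop := by
      rw [mem_map]
      filter_upwards [eventually_ge_atTop k] with n hn
      rw [mem_preimage, mem_cylinder]
      exact hxK hn
    have hz' : ClusterPt z (𝓟 (cylinder (J k) (K k))) :=
      hz.mono (le_principal_iff.mpr hmem)
    rw [← hclosed.closure_eq]
    exact mem_closure_iff_clusterPt.mpr hz'
  have hzA : z ∈ ⋂ n, A n := by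
    rw [mem_iInter]
    intro n
    rw [hAeq' n]
    exact (preimage_mono (hKsub n)) (hzB n)
  rw [hinter] at hzA
  exact hzA

end Continuity

section Subadd

variable {T : Type*} {E : T → Type*} [∀ t, MeasurableSpace (E t)]
  [∀ t, PseudoEMetricSpace (E t)] [∀ t, CompleteSpace (E t)]
  [∀ t, SecondCountableTopology (E t)] [∀ t, BorelSpace (E t)]
  {P : (J : Finset T) → Measure (∀ j : J, E j)} [∀ J, IsFiniteMeasure (P J)]
  [Nonempty (∀ t, E t)]

variable (hP : IsProjectiveMeasureFamily P)
include hP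

lemma kc_subadd {s : Set (∀ t, E t)} (hs : s ∈ measurableCylinders E)
    (t : ℕ → Set (∀ t, E t)) (ht : ∀ n, t n ∈ measurableCylinders E)
    (hsub : s ⊆ ⋃ n, t n) :
    kc P s ≤ ∑' n, kc P (t n) := by
  classical
  have hbU : ∀ n : ℕ, (⋃ k ∈ Finset.range n, t k) ∈ measurableCylinders E := by
    intro n
    induction n with
    | zero => simpa using empty_mem_measurableCylinders E
    | succ n ih =>
        rw [Finset.range_add_one, Finset.set_biUnion_insert]
        exact union_mem_measurableCylinders (ht n) ih
  set u : ℕ → Set (∀ t, E t) := fun n => (s ∩ t n) \ ⋃ k ∈ Finset.range n, t k with hudef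
  have hu_mem : ∀ n, u n ∈ measurableCylinders E := fun n =>
    diff_mem_measurableCylinders (inter_mem_measurableCylinders hs (ht n)) (hbU n)
  have hu_sub_t : ∀ n, u n ⊆ t n := fun n => diff_subset.trans inter_subset_right
  have hu_sub_s : ∀ n, u n ⊆ s := fun n => diff_subset.trans inter_subset_left
  set V : ℕ → Set (∀ t, E t) := fun n => ⋃ k ∈ Finset.range n, u k with hVdef
  set R : ℕ → Set (∀ t, E t) := fun n => s \ V n with hRdef
  have hV_mem : ∀ n, V n ∈ measurableCylinders E := by
    intro n
    induction n with
    | zero => simpa [hVdef] using empty_mem_measurableCylinders E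
    | succ n ih =>
        have : V (n + 1) = u n ∪ V n := by
          simp only [hVdef]
          rw [Finset.range_add_one, Finset.set_biUnion_insert]
        rw [this]
        exact union_mem_measurableCylinders (hu_mem n) ih
  have hR_mem : ∀ n, R n ∈ measurableCylinders E := fun n =>
    diff_mem_measurableCylinders hs (hV_mem n)
  have hVmono : Monotone V := fun a b hab =>
    biUnion_subset_biUnion_left (by exact_mod_cast Finset.range_subset_range.mpr hab)
  have hR_anti : Antitone R := fun a b hab => diff_subset_diff_right (hVmono hab)
  have hs_sub_u : s ⊆ ⋃ n, u n := by
    intro p hp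
    have hex : ∃ n, p ∈ t n := mem_iUnion.mp (hsub hp)
    refine mem_iUnion.mpr ⟨Nat.find hex, ⟨hp, Nat.find_spec hex⟩, ?_⟩
    simp only [mem_iUnion, Finset.mem_range, not_exists]
    intro k hk hpk
    exact Nat.find_min hex hk hpk
  have hR_inter : ⋂ n, R n = ∅ := by
    rw [eq_empty_iff_forall_notMem]
    intro p hp
    rw [mem_iInter] at hp
    have hps : p ∈ s := (hp 0).1
    obtain ⟨n, hn⟩ := mem_iUnion.mp (hs_sub_u hps)
    exact (hp (n + 1)).2 (mem_biUnion (Finset.self_mem_range_succ n) hn)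
  -- decomposition
  have hkey : ∀ n, kc P s = (∑ k ∈ Finset.range n, kc P (u k)) + kc P (R n) := by
    intro n
    induction n with
    | zero =>
        simp only [Finset.range_zero, Finset.sum_empty, zero_add]
        congr 1
        simp [hRdef, hVdef]
    | succ n ih =>
        have hsplit : R n = u n ∪ R (n + 1) := by
          have hVsucc : V (n + 1) = u n ∪ V n := by
            simp only [hVdef]
            rw [Finset.range_add_one, Finset.set_biUnion_insert]
          ext p
          simp only [hRdef, mem_diff, mem_union, hVsucc]
          constructor
          · rintro ⟨hps, hpV⟩
            by_cases hpu : p ∈ u n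
            · exact Or.inl hpu
            · exact Or.inr ⟨hps, fun hmem => by
                rcases hmem with h | h
                · exact hpu h
                · exact hpV h⟩
          · rintro (hpu | ⟨hps, hpV⟩)
            · refine ⟨hu_sub_s n hpu, fun hpV => ?_⟩
              have := hpu.2
              simp only [hVdef, mem_iUnion, Finset.mem_range] at hpV
              obtain ⟨k, hk, hpk⟩ := hpV
              exact this (mem_biUnion (Finset.mem_range.mpr hk) (hu_sub_t k hpk))
            · exact ⟨hps, fun h => hpV (Or.inr h)⟩
        have hdisj : Disjoint (u n) (R (n + 1)) := by
          rw [Set.disjoint_left]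
          intro p hpu hpR
          refine hpR.2 ?_
          simp only [hVdef]
          exact mem_biUnion (Finset.self_mem_range_succ n) hpu
        rw [ih, hsplit, kc_union hP (hu_mem n) (hR_mem (n + 1)) hdisj,
          Finset.sum_range_succ]
        ring
  -- take limits
  have hRlim : Tendsto (fun n => kc P (R n)) atTop (𝓝 0) :=
    kc_tendsto_zero hP R hR_mem hR_anti hR_inter
  have hsumlim : Tendsto (fun n => ∑ k ∈ Finset.range n, kc P (u k)) atTop
      (𝓝 (∑' k, kc P (u k))) := ENNReal.tendsto_nat_tsum _
  have hlim : Tendsto (fun n => (∑ k ∈ Finset.range n, kc P (u k)) + kc P (R n)) atTop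
      (𝓝 (∑' k, kc P (u k) + 0)) := hsumlim.add hRlim
  rw [add_zero] at hlim
  have heq : (fun n => (∑ k ∈ Finset.range n, kc P (u k)) + kc P (R n))
      = fun _ => kc P s := funext fun n => (hkey n).symm
  rw [heq] at hlim
  have : kc P s = ∑' k, kc P (u k) := tendsto_nhds_unique tendsto_const_nhds hlim
  rw [this]
  exact ENNReal.tsum_le_tsum fun n => kc_mono hP (hu_mem n) (ht n) (hu_sub_t n)

lemma exists_isProjectiveLimit :
    ∃ μ : Measure (∀ t, E t), IsProjectiveLimit μ P := by
  classical
  set ν : OuterMeasure (∀ t, E t) :=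
    inducedOuterMeasure (P := fun s => s ∈ measurableCylinders E) (fun s _ => kc P s)
      (empty_mem_measurableCylinders E) (kc_empty hP) with hνdef
  have hν_eq : ∀ {s : Set (∀ t, E t)}, s ∈ measurableCylinders E → ν s = kc P s := by
    intro s hs
    refine le_antisymm ?_ ?_
    · rw [hνdef, inducedOuterMeasure]
      exact (OuterMeasure.ofFunction_le s).trans_eq (extend_eq _ hs)
    · rw [hνdef, inducedOuterMeasure, OuterMeasure.ofFunction_apply]
      refine le_iInf fun t => le_iInf fun htcover => ?_
      by_cases hmem : ∀ i, t i ∈ measurableCylinders E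
      · calc kc P s ≤ ∑' i, kc P (t i) := kc_subadd hP hs t hmem htcover
          _ = ∑' i, extend (fun s (_ : s ∈ measurableCylinders E) => kc P s) (t i) :=
            tsum_congr fun i => (extend_eq (fun s (_ : s ∈ measurableCylinders E) => kc P s) (hmem i)).symm
      · push_neg at hmem
        obtain ⟨i, hi⟩ := hmem
        have h1 : extend (fun s (_ : s ∈ measurableCylinders E) => kc P s) (t i) = ∞ :=
          extend_eq_top _ hi
        have h2 : ∑' i, extend (fun s (_ : s ∈ measurableCylinders E) => kc P s) (t i) = ∞ :=
          eq_top_iff.mpr (h1 ▸ ENNReal.le_tsum i)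
        exact h2 ▸ le_top
  have hcar : (MeasurableSpace.pi : MeasurableSpace (∀ t, E t)) ≤ ν.caratheodory := by
    rw [← generateFrom_measurableCylinders]
    refine MeasurableSpace.generateFrom_le fun s hs => ?_
    rw [hνdef, inducedOuterMeasure]
    refine OuterMeasure.ofFunction_caratheodory fun t => ?_
    by_cases ht : t ∈ measurableCylinders E
    · rw [extend_eq _ ht,
        extend_eq _ (inter_mem_measurableCylinders ht hs),
        extend_eq _ (diff_mem_measurableCylinders ht hs),
        ← kc_union hP (inter_mem_measurableCylinders ht hs)
          (diff_mem_measurableCylinders ht hs)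
          (disjoint_sdiff_self_right.mono_left inter_subset_right),
        Set.inter_union_diff]
    · rw [extend_eq_top _ ht]; exact le_top
  refine ⟨ν.toMeasure hcar, fun I => ?_⟩
  refine Measure.ext fun s hs => ?_
  rw [Measure.map_apply (I.measurable_restrict) hs]
  have hcyl : I.restrict ⁻¹' s = cylinder I s := rfl
  rw [hcyl, toMeasure_apply _ _ (MeasurableSet.cylinder I hs),
    hν_eq (cylinder_mem_measurableCylinders _ _ hs), kc_cylinder hP hs]

end Subadd

end KolmogorovAux

open MeasureTheory

/-- **Kolmogorov extension theorem.** Let `T` be an index set and, for each `t : T`, let `E t`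
be a second-countable complete pseudo-extended-metric space with its Borel σ-algebra.
If `(P J)_{J : Finset T}` is a projective family of finite measures (the pushforward of `P J`
under the restriction map to `H ⊆ J` is `P H`), then there is a unique finite measure on
`∀ t, E t` (with the product σ-algebra, generated by the finite-coordinate projections) whose
pushforward under each projection `π J` is `P J`. -/
theorem kolmogorov_extension {T : Type*} {E : T → Type*}
    [∀ t, MeasurableSpace (E t)] [∀ t, PseudoEMetricSpace (E t)]
    [∀ t, CompleteSpace (E t)] [∀ t, SecondCountableTopology (E t)]
    [∀ t, BorelSpace (E t)]
    (P : (J : Finset T) → Measure (∀ j : J, E j))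
    (hfin : ∀ J, IsFiniteMeasure (P J))
    (hproj : ∀ (H J : Finset T) (hHJ : H ⊆ J),
      (P J).map (fun (f : ∀ j : J, E j) (h : H) => f ⟨h.1, hHJ h.2⟩) = P H) :
    ∃! μ : Measure (∀ t, E t),
      IsFiniteMeasure μ ∧
        ∀ J : Finset T, μ.map (fun (f : ∀ t, E t) (j : J) => f j.1) = P J := by
  classical
  have hP : IsProjectiveMeasureFamily P := fun I J hJI => (hproj J I hJI).symm
  haveI := hfin
  cases isEmpty_or_nonempty (∀ t, E t) with
  | inl h =>
    refine ⟨0, ⟨inferInstance, fun J => ?_⟩, fun ν hν => ?_⟩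
    · rw [Measure.map_zero]
      exact (hP.eq_zero_of_isEmpty J).symm
    · exact ν.eq_zero_of_isEmpty
  | inr h =>
    obtain ⟨μ, hμ⟩ := KolmogorovAux.exists_isProjectiveLimit hP
    refine ⟨μ, ⟨hμ.isFiniteMeasure, fun J => hμ J⟩, fun ν hν => ?_⟩
    have hν' : IsProjectiveLimit ν P := fun J => hν.2 J
    exact hν'.unique hμ
end

section
/- Kolmogorov–Chentsov inequality: Let T be an extended pseudo-metric space with bounded covering number with constant c > 0 and exponent d > 0, let E be an extended pseudo-metric space, and let (X_t)_{t∈T} be a stochastic process satisfying the Kolmogorov condition for exponents (p, q) with constant M, where p > 0 and q > d. Then for every β ∈ (0, (q − d)/p) there exists a finite constant L (depending only on T, c, d, p, q, β) such that for every countable subset T' ⊆ T, E[ sup_{s,t ∈ T'} d_E(X_s, X_t)^p / d_T(s, t)^{βp} ] ≤ M · L, where the ratio is interpreted with the convention 0/0 = 0. -/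
open MeasureTheory ENNReal NNReal Set

/-- A subset `A` of a pseudo-emetric space has bounded (internal) covering number with constant
`c` and exponent `d` if for every `ε ∈ (0, diam A]`, `A` can be covered by at most `c * ε ^ (-d)`
balls of radius `ε` centered in `A`. -/
def HasBoundedInternalCoveringNumber {T : Type*} [PseudoEMetricSpace T]
    (A : Set T) (c : ℝ≥0∞) (d : ℝ) : Prop :=
  ∀ ε : ℝ≥0∞, 0 < ε → ε ≤ EMetric.diam A →
    ∃ S : Finset T, ↑S ⊆ A ∧ (∀ t ∈ A, ∃ s ∈ S, edist t s ≤ ε) ∧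
      (S.card : ℝ≥0∞) ≤ c * ε ^ (-d)

/-- A stochastic process `X : T → Ω → E` satisfies the Kolmogorov condition for exponents
`(p, q)` with constant `M` if the pair `(X s, X t)` is measurable for the Borel σ-algebra on
`E × E` for all `s t : T`, and `E[d_E(X s, X t) ^ p] ≤ M * d_T(s, t) ^ q`. -/
def IsKolmogorovProcess {T Ω E : Type*} [PseudoEMetricSpace T] [PseudoEMetricSpace E]
    [MeasurableSpace Ω] (X : T → Ω → E) (P : Measure Ω) (p q : ℝ) (M : ℝ≥0) : Prop :=
  (∀ s t : T, @Measurable Ω (E × E) _ (borel (E × E)) fun ω => (X s ω, X t ω)) ∧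
  ∀ s t : T, ∫⁻ ω, edist (X s ω) (X t ω) ^ p ∂P ≤ (M : ℝ≥0∞) * edist s t ^ q

/-!
Cover `T` by nets `C n` at the dyadic scales `D / 2 ^ n`, where `D` is the diameter, of size
`O(2 ^ (d n))`, and let `π n` project onto them. Since `E[d(X t, X (π n t)) ^ p]` is at most
`M (D / 2 ^ n) ^ q → 0`, almost surely `X (π n t)` comes arbitrarily close to `X t` along every
tail of the chain `π m t, π (m + 1) t, …`. So for `D / 2 ^ (m + 1) < d(s, t) ≤ D / 2 ^ m`, the
increment `d(X s, X t)` is at most three times the tail `∑ n ≥ m` of the maximal increments `V n`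
of `X` over the pairs of `C n ∪ C (n + 1)` at distance `≤ 3 D / 2 ^ n`, and all Hölder quotients
are dominated by the single variable `∑ n, 2 ^ (β p n) V n ^ p`.

The moments of `V n` come from a maximal inequality on a finite set `C`: for `θ ∈ (0, 1]`,
`E[max {d(X x, X y) ^ p | x, y ∈ C, d(x, y) ≤ ρ}] ≲ |C| ^ (1 + θ) M ρ ^ q`. Given such a pair,
let `j` be the first scale at which the number of points of `C` within `ρ 2 ^ j` of `x` fails to
grow by a factor `2 ^ A` over two steps. Averaging the triangle inequality over that ball bounds
`d(X x, X y) ^ p` by the averages of `d(X u, X v) ^ p` over `v` in the balls of radius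
`ρ 2 ^ (j + 1)` around `u = x` and `u = y`, and both centres lie among the at most
`|C| ^ 2 / 2 ^ (A j / 2)` points that are that crowded at scale `j`. Taking expectations and
summing over `j` gives `|C| ^ (1 + θ)`, and `θ` small enough that `d (1 + θ) + β p < q` makes
the series over `n` converge.
-/

open Finset Filter Topology

namespace ENNReal

lemma rpow_pow_comm (x : ℝ≥0∞) (y : ℝ) (n : ℕ) : (x ^ y) ^ n = (x ^ n) ^ y := by
  rw [← rpow_mul_natCast, ← rpow_natCast_mul, mul_comm]

lemma add_rpow_le_two_rpow_mul {p : ℝ} (hp : 0 ≤ p) (a b : ℝ≥0∞) :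
    (a + b) ^ p ≤ 2 ^ p * (a ^ p + b ^ p) :=
  calc (a + b) ^ p ≤ (2 * max a b) ^ p := by
        gcongr
        rw [two_mul]
        exact add_le_add (le_max_left a b) (le_max_right a b)
    _ = 2 ^ p * max a b ^ p := mul_rpow_of_nonneg _ _ hp
    _ ≤ 2 ^ p * (a ^ p + b ^ p) := by
        gcongr
        rcases max_cases a b with ⟨h, _⟩ | ⟨h, _⟩ <;> rw [h]
        exacts [le_self_add, le_add_self]

lemma min_le_rpow_mul_rpow {x y : ℝ≥0∞} (hx : x ≠ ∞) {θ : ℝ} (hθ₀ : 0 ≤ θ) (hθ₁ : θ ≤ 1) :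
    min x y ≤ x ^ (1 - θ) * y ^ θ := by
  rcases eq_or_ne (min x y) 0 with h | h
  · simp [h]
  calc min x y = min x y ^ (1 - θ) * min x y ^ θ := by
        rw [← rpow_add _ _ h (ne_top_of_le_ne_top hx (min_le_left x y)), sub_add_cancel,
          rpow_one]
    _ ≤ x ^ (1 - θ) * y ^ θ := by
        gcongr ?_ * ?_
        · exact rpow_le_rpow (min_le_left x y) (by linarith)
        · exact rpow_le_rpow (min_le_right x y) hθ₀

lemma iSup_rpow_le_tsum_rpow (x : ℕ → ℝ≥0∞) {p : ℝ} (hp : 0 < p) :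
    (⨆ n, x n) ^ p ≤ ∑' n, x n ^ p :=
  (le_rpow_inv_iff hp).1 <| iSup_le fun n =>
    (le_rpow_inv_iff hp).2 <| ENNReal.le_tsum (f := fun n => x n ^ p) n

lemma tsum_add_le_inv_pow_mul_iSup {a : ℝ≥0∞} (ha₀ : a ≠ 0) (ha : a ≠ ∞) (V : ℕ → ℝ≥0∞)
    (m : ℕ) : ∑' i, V (m + i) ≤ a⁻¹ ^ m * (1 - a⁻¹)⁻¹ * ⨆ n, a ^ n * V n := by
  set S := ⨆ n, a ^ n * V n
  have hV : ∀ n, V n ≤ a⁻¹ ^ n * S := fun n =>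
    calc V n = a⁻¹ ^ n * (a ^ n * V n) := by
          rw [← mul_assoc, ← mul_pow, ENNReal.inv_mul_cancel ha₀ ha, one_pow, one_mul]
      _ ≤ a⁻¹ ^ n * S := by gcongr; exact le_iSup (fun n => a ^ n * V n) n
  calc ∑' i, V (m + i) ≤ ∑' i, a⁻¹ ^ m * S * a⁻¹ ^ i :=
        ENNReal.tsum_le_tsum fun i => (hV (m + i)).trans_eq (by ring)
    _ = a⁻¹ ^ m * (1 - a⁻¹)⁻¹ * S := by
        rw [ENNReal.tsum_mul_left, tsum_geometric]; ring

lemma exists_two_pow_mul_le_lt {e D : ℝ≥0∞} (he : e ≠ 0) (hD : D ≠ ∞) (heD : e ≤ D) :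
    ∃ m : ℕ, 2 ^ m * e ≤ D ∧ D < 2 ^ (m + 1) * e := by
  have hex : ∃ m : ℕ, D < 2 ^ (m + 1) * e := by
    obtain ⟨n, hn⟩ := exists_nat_mul_gt he hD
    refine ⟨n, hn.trans_le (mul_le_mul_left ?_ e)⟩
    exact_mod_cast (Nat.lt_two_pow_self.trans (Nat.pow_lt_pow_succ (by norm_num))).le
  refine ⟨Nat.find hex, ?_, Nat.find_spec hex⟩
  rcases Nat.eq_zero_or_eq_succ_pred (Nat.find hex) with h | h
  · simpa [h] using heD
  · rw [h]
    exact not_lt.1 (Nat.find_min hex (Nat.pred_lt (by omega)))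

end ENNReal

lemma edist_le_tsum_of_iInf_edist_eq_zero {E : Type*} [PseudoEMetricSpace E] {x : ℕ → E} {y : E}
    {w : ℕ → ℝ≥0∞} (hw : ∀ n, edist (x n) (x (n + 1)) ≤ w n) (hy : ⨅ n, edist y (x n) = 0) :
    edist y (x 0) ≤ ∑' n, w n := by
  have h : ∀ k, edist y (x 0) ≤ edist y (x k) + ∑' n, w n := fun k =>
    calc edist y (x 0) ≤ edist y (x k) + edist (x k) (x 0) := edist_triangle _ _ _
      _ ≤ edist y (x k) + ∑' n, w n := by
          rw [edist_comm (x k)]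
          gcongr
          exact (edist_le_range_sum_of_edist_le k fun {n} _ => hw n).trans (ENNReal.sum_le_tsum _)
  simpa [← ENNReal.iInf_add, hy] using le_iInf h

lemma edist_rpow_le_mul_add_averages {ι E : Type*} [PseudoEMetricSpace E] (g : ι → E) {p : ℝ}
    (hp : 0 ≤ p) {x y : ι} {S S₁ S₂ : Finset ι} (hS : S.Nonempty) (h₁ : S ⊆ S₁) (h₂ : S ⊆ S₂)
    {K : ℕ} (hK₁ : #S₁ ≤ K * #S) (hK₂ : #S₂ ≤ K * #S) :
    edist (g x) (g y) ^ p ≤ 2 ^ p * K * ((∑ z ∈ S₁, edist (g x) (g z) ^ p) / #S₁ +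
      (∑ z ∈ S₂, edist (g y) (g z) ^ p) / #S₂) := by
  set a₁ := ∑ z ∈ S₁, edist (g x) (g z) ^ p
  set a₂ := ∑ z ∈ S₂, edist (g y) (g z) ^ p
  have hS₀ : (#S : ℝ≥0∞) ≠ 0 := by simpa using hS.ne_empty
  have hsum_le : ∀ {S' : Finset ι} {a : ℝ≥0∞}, S ⊆ S' → #S' ≤ K * #S →
      a ≤ K * #S * (a / #S') := fun {S'} a hS' hK => by
    have : (#S' : ℝ≥0∞) ≠ 0 := by simpa using (hS.mono hS').ne_empty
    calc a = #S' * (a / #S') := (ENNReal.mul_div_cancel this (natCast_ne_top _)).symm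
      _ ≤ K * #S * (a / #S') := by gcongr; exact_mod_cast hK
  refine (ENNReal.mul_le_mul_iff_right hS₀ (natCast_ne_top _)).1 ?_
  calc #S * edist (g x) (g y) ^ p = ∑ _z ∈ S, edist (g x) (g y) ^ p := by simp
    _ ≤ ∑ z ∈ S, 2 ^ p * (edist (g x) (g z) ^ p + edist (g y) (g z) ^ p) := by
        gcongr with z
        refine (ENNReal.rpow_le_rpow ?_ hp).trans (ENNReal.add_rpow_le_two_rpow_mul hp _ _)
        exact edist_triangle_right _ _ _
    _ ≤ 2 ^ p * (a₁ + a₂) := by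
        rw [← mul_sum, sum_add_distrib]
        gcongr
        exacts [sum_le_sum_of_subset h₁, sum_le_sum_of_subset h₂]
    _ ≤ 2 ^ p * (K * #S * (a₁ / #S₁) + K * #S * (a₂ / #S₂)) := by
        gcongr
        exacts [hsum_le h₁ hK₁, hsum_le h₂ hK₂]
    _ = #S * (2 ^ p * K * (a₁ / #S₁ + a₂ / #S₂)) := by ring

lemma lintegral_sum_div_card_le {Ω ι : Type*} [MeasurableSpace Ω] {P : Measure Ω} {S : Finset ι}
    {f : ι → Ω → ℝ≥0∞} (hf : ∀ i ∈ S, Measurable (f i)) {B : ℝ≥0∞}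
    (hB : ∀ i ∈ S, ∫⁻ ω, f i ω ∂P ≤ B) : ∫⁻ ω, (∑ i ∈ S, f i ω) / #S ∂P ≤ B := by
  simp_rw [div_eq_mul_inv]
  rw [lintegral_mul_const'' _ (Finset.measurable_sum _ hf).aemeasurable,
    lintegral_finsetSum _ hf, ← div_eq_mul_inv]
  exact ENNReal.div_le_of_le_mul ((sum_le_sum hB).trans_eq (by simp [mul_comm]))

section KolmogorovCondition

variable {T Ω E : Type*} [PseudoEMetricSpace T] [MeasurableSpace Ω] [PseudoEMetricSpace E]
  {X : T → Ω → E} {P : Measure Ω} {p q : ℝ} {M : ℝ≥0}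

lemma IsKolmogorovProcess.measurable_edist (hX : IsKolmogorovProcess X P p q M) (s t : T) :
    Measurable fun ω => edist (X s ω) (X t ω) :=
  letI : MeasurableSpace (E × E) := borel (E × E)
  haveI : BorelSpace (E × E) := ⟨rfl⟩
  continuous_edist.measurable.comp (hX.1 s t)

lemma IsKolmogorovProcess.ae_iInf_edist_eq_zero (hX : IsKolmogorovProcess X P p q M)
    (hp : 0 < p) (hq : 0 < q) {t : T} {s : ℕ → T}
    (hs : Tendsto (fun k => edist t (s k)) atTop (𝓝 0)) :
    ∀ᵐ ω ∂P, ⨅ k, edist (X t ω) (X (s k) ω) = 0 := by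
  have hmeas : Measurable fun ω => ⨅ k, edist (X t ω) (X (s k) ω) ^ p :=
    Measurable.iInf fun k => (hX.measurable_edist t (s k)).pow_const p
  have hlim : Tendsto (fun k => (M : ℝ≥0∞) * edist t (s k) ^ q) atTop (𝓝 0) := by
    simpa [zero_rpow_of_pos hq] using ENNReal.Tendsto.const_mul (a := M)
      (((ENNReal.continuous_rpow_const (y := q)).tendsto 0).comp hs) (Or.inr coe_ne_top)
  have hint : ∫⁻ ω, ⨅ k, edist (X t ω) (X (s k) ω) ^ p ∂P = 0 :=
    nonpos_iff_eq_zero.1 <| ge_of_tendsto' hlim fun k =>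
      (lintegral_mono fun ω => iInf_le _ k).trans (hX.2 t (s k))
  filter_upwards [(lintegral_eq_zero_iff hmeas).1 hint] with ω hω
  refine (ENNReal.rpow_eq_zero_iff_of_pos hp).1 (nonpos_iff_eq_zero.1 ?_)
  exact (le_iInf fun k => ENNReal.rpow_le_rpow (iInf_le _ k) hp.le).trans hω.le

lemma IsKolmogorovProcess.ae_edist_eq_zero_of_edist_eq_zero (hX : IsKolmogorovProcess X P p q M)
    (hp : 0 < p) (hq : 0 < q) {T' : Set T} (hT' : T'.Countable) :
    ∀ᵐ ω ∂P, ∀ s ∈ T', ∀ t ∈ T', edist s t = 0 → edist (X s ω) (X t ω) = 0 := by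
  refine (ae_ball_iff hT').2 fun s _ => (ae_ball_iff hT').2 fun t _ => ?_
  by_cases hst : edist s t = 0
  · filter_upwards [hX.ae_iInf_edist_eq_zero hp hq (t := s) (s := fun _ => t) (by simp [hst])]
      with ω hω
    simpa using fun _ => hω
  · exact Eventually.of_forall fun ω h => absurd h hst

lemma IsKolmogorovProcess.lintegral_iSup_edist_rpow_div_eq_zero
    (hX : IsKolmogorovProcess X P p q M) (hp : 0 < p) (hq : 0 < q) {β : ℝ} {T' : Set T}
    (hT' : T'.Countable) (h : ∀ s ∈ T', ∀ t ∈ T', edist s t = 0) :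
    ∫⁻ ω, ⨆ s ∈ T', ⨆ t ∈ T', edist (X s ω) (X t ω) ^ p / edist s t ^ (β * p) ∂P = 0 := by
  refine nonpos_iff_eq_zero.1 ((lintegral_mono_ae ?_).trans_eq lintegral_zero)
  filter_upwards [hX.ae_edist_eq_zero_of_edist_eq_zero hp hq hT'] with ω hω
  exact iSup₂_le fun s hs => iSup₂_le fun t ht => by simp [hω s hs t ht (h s hs t ht), hp]

end KolmogorovCondition

section MaxIncrement

variable {T E : Type*} [PseudoEMetricSpace T] [PseudoEMetricSpace E]

noncomputable def maxIncrement (f : T → E) (C : Finset T) (ρ : ℝ≥0∞) : ℝ≥0∞ :=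
  ⨆ x ∈ C, ⨆ y ∈ C, ⨆ (_ : edist x y ≤ ρ), edist (f x) (f y)

variable {f : T → E} {C : Finset T} {ρ : ℝ≥0∞}

lemma edist_le_maxIncrement {x y : T} (hx : x ∈ C) (hy : y ∈ C) (hxy : edist x y ≤ ρ) :
    edist (f x) (f y) ≤ maxIncrement f C ρ :=
  le_iSup₂_of_le x hx <| le_iSup₂_of_le y hy <| le_iSup_of_le hxy le_rfl

lemma maxIncrement_rpow_le {p : ℝ} (hp : 0 < p) {B : ℝ≥0∞}
    (h : ∀ x ∈ C, ∀ y ∈ C, edist x y ≤ ρ → edist (f x) (f y) ^ p ≤ B) :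
    maxIncrement f C ρ ^ p ≤ B :=
  (ENNReal.le_rpow_inv_iff hp).1 <| iSup₂_le fun x hx => iSup₂_le fun y hy => iSup_le fun hxy =>
    (ENNReal.le_rpow_inv_iff hp).2 (h x hx y hy hxy)

lemma IsKolmogorovProcess.measurable_maxIncrement {Ω : Type*} [MeasurableSpace Ω]
    {X : T → Ω → E} {P : Measure Ω} {p q : ℝ} {M : ℝ≥0} (hX : IsKolmogorovProcess X P p q M)
    (C : Finset T) (ρ : ℝ≥0∞) : Measurable fun ω => maxIncrement (X · ω) C ρ :=
  Measurable.biSup _ C.countable_toSet fun x _ => Measurable.biSup _ C.countable_toSet fun y _ =>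
    Measurable.iSup fun _ => hX.measurable_edist x y

end MaxIncrement

namespace KolmogorovChentsov

variable {T E : Type*} [PseudoEMetricSpace T] [PseudoEMetricSpace E]
  {C : Finset T} {ρ : ℝ≥0∞} {A j : ℕ} {x y : T}

variable (C ρ) in
noncomputable def dyadicBall (j : ℕ) (x : T) : Finset T := {v ∈ C | edist x v ≤ ρ * 2 ^ j}

lemma dyadicBall_mono {k : ℕ} (h : j ≤ k) (x : T) : dyadicBall C ρ j x ⊆ dyadicBall C ρ k x :=
  monotone_filter_right _ fun _ _ hv => hv.trans (by gcongr; exact one_le_two)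

lemma mem_dyadicBall_self (hx : x ∈ C) : x ∈ dyadicBall C ρ j x := by
  simp [dyadicBall, hx]

lemma one_le_card_dyadicBall (hx : x ∈ C) : 1 ≤ #(dyadicBall C ρ j x) :=
  card_pos.2 ⟨x, mem_dyadicBall_self hx⟩

lemma dyadicBall_subset_succ_of_edist_le (h : edist y x ≤ ρ) :
    dyadicBall C ρ j x ⊆ dyadicBall C ρ (j + 1) y := by
  refine fun v hv => mem_filter.2 ⟨(mem_filter.1 hv).1, ?_⟩
  calc edist y v ≤ edist y x + edist x v := edist_triangle _ _ _
    _ ≤ ρ * 1 + ρ * 2 ^ j := by rw [mul_one]; exact add_le_add h (mem_filter.1 hv).2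
    _ ≤ ρ * 2 ^ (j + 1) := by
        rw [← mul_add, pow_succ, mul_two]
        gcongr
        exact one_le_pow₀ one_le_two

lemma pow_le_card_dyadicBall {i : ℕ} (hx : x ∈ C)
    (hgrow : ∀ k, k + 2 ≤ i → 2 ^ A * #(dyadicBall C ρ k x) < #(dyadicBall C ρ (k + 2) x)) :
    2 ^ (A * (i / 2)) ≤ #(dyadicBall C ρ i x) := by
  induction i using Nat.twoStepInduction with
  | zero => simpa using one_le_card_dyadicBall hx
  | one => simpa using one_le_card_dyadicBall hx
  | more i ih _ =>
    calc 2 ^ (A * ((i + 2) / 2)) = 2 ^ A * 2 ^ (A * (i / 2)) := by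
          rw [Nat.add_div_right i two_pos, mul_add_one, pow_add, mul_comm]
      _ ≤ 2 ^ A * #(dyadicBall C ρ i x) :=
          Nat.mul_le_mul_left _ (ih fun k hk => hgrow k (by omega))
      _ ≤ #(dyadicBall C ρ (i + 2) x) := (hgrow i le_rfl).le

lemma exists_doubling_scale (hA : 1 ≤ A) (hx : x ∈ C) :
    ∃ j, #(dyadicBall C ρ (j + 2) x) ≤ 2 ^ A * #(dyadicBall C ρ j x) ∧
      ∀ i ≤ j, 2 ^ (A * (i / 2)) ≤ #(dyadicBall C ρ i x) := by
  have hex : ∃ j, #(dyadicBall C ρ (j + 2) x) ≤ 2 ^ A * #(dyadicBall C ρ j x) := by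
    by_contra! h
    have hC : 2 ^ (A * (2 * #C / 2)) ≤ #C :=
      (pow_le_card_dyadicBall hx fun k _ => h k).trans (card_filter_le _ _)
    have : #C < 2 ^ (A * (2 * #C / 2)) := by
      rw [Nat.mul_div_cancel_left _ two_pos]
      exact Nat.lt_two_pow_self.trans_le
        (Nat.pow_le_pow_right two_pos (Nat.le_mul_of_pos_left _ hA))
    omega
  refine ⟨Nat.find hex, Nat.find_spec hex, fun i hi => pow_le_card_dyadicBall hx fun k hk => ?_⟩
  exact not_le.1 (Nat.find_min hex (by omega))

variable (C ρ A) in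
/-- Every point within `ρ` of a point whose doubling scale is `j` passes this threshold at
scale `j`, by the geometric growth below the doubling scale. -/
noncomputable def heavyPoints (j : ℕ) : Finset T :=
  {u ∈ C | 2 ^ (A * ((j - 1) / 2)) ≤ #(dyadicBall C ρ j u)}

lemma card_heavyPoints_le {θ : ℝ} (hθ₀ : 0 ≤ θ) (hθ₁ : θ ≤ 1) :
    (#(heavyPoints C ρ A j) : ℝ≥0∞) ≤ #C ^ (1 + θ) / 2 ^ (θ * (A * ((j - 1) / 2) : ℕ)) := by
  set k := A * ((j - 1) / 2)
  have hcount : #(heavyPoints C ρ A j) * 2 ^ k ≤ #C * #C :=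
    calc #(heavyPoints C ρ A j) * 2 ^ k ≤ ∑ u ∈ heavyPoints C ρ A j, #(dyadicBall C ρ j u) := by
          rw [← smul_eq_mul]
          exact card_nsmul_le_sum _ _ _ fun u hu => (mem_filter.1 hu).2
      _ ≤ ∑ u ∈ C, #(dyadicBall C ρ j u) := sum_le_sum_of_subset (filter_subset _ _)
      _ ≤ #C * #C := sum_le_card_nsmul _ _ _ fun u _ => card_filter_le _ _
  have hmin : (#(heavyPoints C ρ A j) : ℝ≥0∞) ≤ min (#C : ℝ≥0∞) (#C * #C / 2 ^ k) := by
    refine le_min (by exact_mod_cast card_filter_le _ _) ?_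
    rw [ENNReal.le_div_iff_mul_le (by simp) (by simp)]
    exact_mod_cast hcount
  calc (#(heavyPoints C ρ A j) : ℝ≥0∞)
      ≤ (#C : ℝ≥0∞) ^ (1 - θ) * (#C * #C / 2 ^ k) ^ θ :=
        hmin.trans (ENNReal.min_le_rpow_mul_rpow (natCast_ne_top _) hθ₀ hθ₁)
    _ = #C ^ (1 + θ) / 2 ^ (θ * k) := by
        rw [ENNReal.div_rpow_of_nonneg _ _ hθ₀, ENNReal.mul_rpow_of_nonneg _ _ hθ₀,
          ← ENNReal.rpow_natCast, ← ENNReal.rpow_mul, mul_comm (k : ℝ),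
          show 1 + θ = (1 - θ) + θ + θ by ring,
          ENNReal.rpow_add_of_nonneg _ _ (by linarith) hθ₀,
          ENNReal.rpow_add_of_nonneg _ _ (by linarith) hθ₀, mul_div_assoc, mul_div_assoc,
          mul_assoc]

lemma tsum_two_rpow_div_le {q θ : ℝ} (hq : 0 ≤ q) (hA : 2 * q + 2 ≤ θ * A) :
    ∑' j : ℕ, (2 : ℝ≥0∞) ^ (((j : ℝ) + 1) * q) / 2 ^ (θ * (A * ((j - 1) / 2) : ℕ)) ≤
      2 ^ (3 * q + 3) := by
  have hterm : ∀ j : ℕ, (2 : ℝ≥0∞) ^ (((j : ℝ) + 1) * q) / 2 ^ (θ * (A * ((j - 1) / 2) : ℕ)) ≤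
      2 ^ (3 * q + 2) * 2⁻¹ ^ j := fun j => by
    rw [← ENNReal.rpow_sub _ _ two_ne_zero ofNat_ne_top, ← ENNReal.inv_pow, ← ENNReal.rpow_natCast,
      ← ENNReal.rpow_neg, ← ENNReal.rpow_add _ _ two_ne_zero ofNat_ne_top]
    refine ENNReal.rpow_le_rpow_of_exponent_le one_le_two ?_
    have hj : (j : ℝ) ≤ 2 * ((j - 1) / 2 : ℕ) + 2 := by
      exact_mod_cast (by omega : j ≤ 2 * ((j - 1) / 2) + 2)
    have hk : (2 * q + 2) * ((j - 1) / 2 : ℕ) ≤ θ * A * ((j - 1) / 2 : ℕ) := by gcongr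
    push_cast at hk ⊢
    nlinarith
  calc _ ≤ ∑' j : ℕ, 2 ^ (3 * q + 2) * (2 : ℝ≥0∞)⁻¹ ^ j := ENNReal.tsum_le_tsum hterm
    _ = 2 ^ (3 * q + 3) := by
        rw [ENNReal.tsum_mul_left, ENNReal.tsum_geometric, ENNReal.one_sub_inv_two, inv_inv,
          show 3 * q + 3 = 3 * q + 2 + 1 by ring,
          ENNReal.rpow_add (3 * q + 2) 1 two_ne_zero ofNat_ne_top, ENNReal.rpow_one]

variable (C ρ A) in
noncomputable def dyadicEnergy (g : T → E) (p : ℝ) : ℝ≥0∞ :=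
  ∑' j, ∑ u ∈ heavyPoints C ρ A j,
    (∑ v ∈ dyadicBall C ρ (j + 1) u, edist (g u) (g v) ^ p) / #(dyadicBall C ρ (j + 1) u)

lemma edist_rpow_le_dyadicEnergy (hA : 1 ≤ A) (g : T → E) {p : ℝ} (hp : 0 ≤ p) (hx : x ∈ C)
    (hy : y ∈ C) (hxy : edist x y ≤ ρ) :
    edist (g x) (g y) ^ p ≤ 2 ^ p * 2 ^ (A + 1) * dyadicEnergy C ρ A g p := by
  obtain ⟨j, hdouble, hgrowth⟩ := exists_doubling_scale (ρ := ρ) hA hx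
  have hyx : edist y x ≤ ρ := by rwa [edist_comm]
  have hmem : ∀ u ∈ heavyPoints C ρ A j, (∑ v ∈ dyadicBall C ρ (j + 1) u, edist (g u) (g v) ^ p) /
      #(dyadicBall C ρ (j + 1) u) ≤ dyadicEnergy C ρ A g p := fun u hu =>
    (single_le_sum (f := fun u => (∑ v ∈ dyadicBall C ρ (j + 1) u, edist (g u) (g v) ^ p) /
      (#(dyadicBall C ρ (j + 1) u) : ℝ≥0∞)) (fun _ _ => zero_le) hu).trans
      (ENNReal.le_tsum j)
  have hx_heavy : x ∈ heavyPoints C ρ A j := mem_filter.2 ⟨hx,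
    (Nat.pow_le_pow_right two_pos (Nat.mul_le_mul_left _ (by omega))).trans (hgrowth j le_rfl)⟩
  have hy_heavy : y ∈ heavyPoints C ρ A j := by
    refine mem_filter.2 ⟨hy, ?_⟩
    rcases Nat.eq_zero_or_eq_succ_pred j with h | h
    · simpa [h] using one_le_card_dyadicBall hy
    · rw [h]
      exact (hgrowth _ (by omega)).trans
        (Finset.card_le_card (dyadicBall_subset_succ_of_edist_le hyx))
  calc edist (g x) (g y) ^ p ≤ 2 ^ p * (2 ^ A : ℕ) *
        ((∑ z ∈ dyadicBall C ρ (j + 1) x, edist (g x) (g z) ^ p) / #(dyadicBall C ρ (j + 1) x) +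
        (∑ z ∈ dyadicBall C ρ (j + 1) y, edist (g y) (g z) ^ p) / #(dyadicBall C ρ (j + 1) y)) :=
        edist_rpow_le_mul_add_averages g hp ⟨x, mem_dyadicBall_self hx⟩
          (dyadicBall_mono j.le_succ x) (dyadicBall_subset_succ_of_edist_le hyx)
          ((Finset.card_le_card (dyadicBall_mono (by omega) x)).trans hdouble)
          ((Finset.card_le_card (dyadicBall_subset_succ_of_edist_le hxy)).trans hdouble)
    _ ≤ 2 ^ p * 2 ^ A * (dyadicEnergy C ρ A g p + dyadicEnergy C ρ A g p) := by
        push_cast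
        gcongr
        exacts [hmem x hx_heavy, hmem y hy_heavy]
    _ = 2 ^ p * 2 ^ (A + 1) * dyadicEnergy C ρ A g p := by ring

lemma lintegral_dyadicEnergy_le {Ω : Type*} [MeasurableSpace Ω] {X : T → Ω → E} {P : Measure Ω}
    {p q : ℝ} {M : ℝ≥0} (hX : IsKolmogorovProcess X P p q M) (hq : 0 ≤ q) :
    ∫⁻ ω, dyadicEnergy C ρ A (X · ω) p ∂P ≤
      ∑' j : ℕ, #(heavyPoints C ρ A j) * (M * (ρ * 2 ^ (j + 1)) ^ q) := by
  unfold dyadicEnergy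
  have hmeas : ∀ u v, Measurable fun ω => edist (X u ω) (X v ω) ^ p := fun u v =>
    (hX.measurable_edist u v).pow_const p
  rw [lintegral_tsum fun j => (Finset.measurable_sum _ fun u _ =>
    (Finset.measurable_sum _ fun v _ => hmeas u v).div_const _).aemeasurable]
  refine ENNReal.tsum_le_tsum fun j => ?_
  rw [lintegral_finsetSum _ fun u _ => (Finset.measurable_sum _ fun v _ => hmeas u v).div_const _]
  refine (sum_le_sum fun u _ => lintegral_sum_div_card_le (fun v _ => hmeas u v)
    fun v hv => (hX.2 u v).trans ?_).trans_eq (by rw [sum_const, nsmul_eq_mul])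
  gcongr
  exact (mem_filter.1 hv).2

end KolmogorovChentsov

open KolmogorovChentsov in
theorem IsKolmogorovProcess.lintegral_maxIncrement_rpow_le {T Ω E : Type*} [PseudoEMetricSpace T]
    [MeasurableSpace Ω] [PseudoEMetricSpace E] {X : T → Ω → E} {P : Measure Ω} {p q : ℝ}
    {M : ℝ≥0} (hX : IsKolmogorovProcess X P p q M) (hp : 0 < p) (hq : 0 ≤ q) {θ : ℝ}
    (hθ : θ ≤ 1) {A : ℕ} (hA : 2 * q + 2 ≤ θ * A) (C : Finset T) (ρ : ℝ≥0∞) :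
    ∫⁻ ω, maxIncrement (X · ω) C ρ ^ p ∂P ≤
      2 ^ p * 2 ^ (A + 1) * 2 ^ (3 * q + 3) * #C ^ (1 + θ) * M * ρ ^ q := by
  have hθA : 0 < θ * A := by linarith
  have hθ₀ : 0 ≤ θ := (pos_of_mul_pos_left hθA (Nat.cast_nonneg A)).le
  have hA₁ : 1 ≤ A := Nat.cast_pos.1 (pos_of_mul_pos_right hθA hθ₀)
  have hterm : ∀ j : ℕ, (#(heavyPoints C ρ A j) : ℝ≥0∞) * (M * (ρ * 2 ^ (j + 1)) ^ q) ≤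
      #C ^ (1 + θ) * M * ρ ^ q *
        (2 ^ (((j : ℝ) + 1) * q) / 2 ^ (θ * (A * ((j - 1) / 2) : ℕ))) := fun j => by
    calc (#(heavyPoints C ρ A j) : ℝ≥0∞) * (M * (ρ * 2 ^ (j + 1)) ^ q)
        ≤ #C ^ (1 + θ) / 2 ^ (θ * (A * ((j - 1) / 2) : ℕ)) * (M * (ρ * 2 ^ (j + 1)) ^ q) := by
          gcongr
          exact card_heavyPoints_le hθ₀ hθ
      _ = _ := by
          rw [ENNReal.mul_rpow_of_nonneg _ _ hq, ← ENNReal.rpow_natCast, ← ENNReal.rpow_mul,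
            div_eq_mul_inv, div_eq_mul_inv]
          push_cast
          ring
  calc ∫⁻ ω, maxIncrement (X · ω) C ρ ^ p ∂P
      ≤ ∫⁻ ω, 2 ^ p * 2 ^ (A + 1) * dyadicEnergy C ρ A (X · ω) p ∂P :=
        lintegral_mono fun ω => maxIncrement_rpow_le hp fun x hx y hy hxy =>
          edist_rpow_le_dyadicEnergy hA₁ _ hp.le hx hy hxy
    _ = 2 ^ p * 2 ^ (A + 1) * ∫⁻ ω, dyadicEnergy C ρ A (X · ω) p ∂P :=
        lintegral_const_mul' _ _ (by finiteness)
    _ ≤ 2 ^ p * 2 ^ (A + 1) * (#C ^ (1 + θ) * M * ρ ^ q * 2 ^ (3 * q + 3)) := by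
        gcongr
        refine (lintegral_dyadicEnergy_le hX hq).trans ?_
        refine (ENNReal.tsum_le_tsum hterm).trans ?_
        rw [ENNReal.tsum_mul_left]
        gcongr
        exact tsum_two_rpow_div_le hq hA
    _ = 2 ^ p * 2 ^ (A + 1) * 2 ^ (3 * q + 3) * #C ^ (1 + θ) * M * ρ ^ q := by ring

section Nets

variable {T : Type*} [PseudoEMetricSpace T] {A : Set T} {c : ℝ≥0∞} {d : ℝ}

lemma HasBoundedInternalCoveringNumber.ediam_ne_top (hA : HasBoundedInternalCoveringNumber A c d)
    (hd : 0 < d) : Metric.ediam A ≠ ∞ := by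
  intro hD
  obtain ⟨S, -, hcover, hcard⟩ := hA ∞ (by simp) hD.ge
  rw [ENNReal.top_rpow_of_neg (neg_neg_iff_pos.2 hd), mul_zero, nonpos_iff_eq_zero,
    Nat.cast_eq_zero, card_eq_zero] at hcard
  obtain ⟨t, ht⟩ : A.Nonempty := Set.nonempty_iff_ne_empty.2 fun h => by simp [h] at hD
  simpa [hcard] using hcover t ht

lemma HasBoundedInternalCoveringNumber.exists_dyadic_nets
    (hT : HasBoundedInternalCoveringNumber (univ : Set T) c d) (hd : 0 ≤ d)
    (hD₀ : Metric.ediam (univ : Set T) ≠ 0) :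
    ∃ (C : ℕ → Finset T) (π : ℕ → T → T), (∀ n t, π n t ∈ C n) ∧
      (∀ n t, edist t (π n t) ≤ Metric.ediam (univ : Set T) / 2 ^ n) ∧
      ∀ n, (#(C n) : ℝ≥0∞) ≤ c / Metric.ediam (univ : Set T) ^ d * (2 ^ d) ^ n := by
  set D := Metric.ediam (univ : Set T)
  choose C hC using fun n : ℕ => hT (D / 2 ^ n) (ENNReal.div_pos hD₀ (by finiteness))
    (ENNReal.div_le_of_le_mul (le_mul_of_one_le_right' (one_le_pow₀ one_le_two)))
  choose π hπC hπ using fun n t => (hC n).2.1 t (mem_univ t)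
  refine ⟨C, π, hπC, hπ, fun n => (hC n).2.2.trans_eq ?_⟩
  rw [ENNReal.rpow_neg, ENNReal.div_rpow_of_nonneg _ _ hd, ← ENNReal.rpow_pow_comm,
    ENNReal.inv_div (by simp) (by simp)]
  simp only [div_eq_mul_inv]
  ring

end Nets

section Chaining

variable {T Ω E : Type*} [PseudoEMetricSpace T] [DecidableEq T] [MeasurableSpace Ω]
  [PseudoEMetricSpace E] {X : T → Ω → E} {P : Measure Ω} {p q β : ℝ} {M : ℝ≥0}
  {C : ℕ → Finset T} {D : ℝ≥0∞} {π : ℕ → T → T} {T' : Set T}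

variable (C D) in
/-- Both a link `π n t, π (n + 1) t` and the level-`n` projections of two points at distance
`≤ D / 2 ^ n` are pairs of `C n ∪ C (n + 1)` at distance `≤ 3 * (D / 2 ^ n)`. -/
noncomputable def dyadicLinkIncrement (f : T → E) (n : ℕ) : ℝ≥0∞ :=
  maxIncrement f (C n ∪ C (n + 1)) (3 * (D / 2 ^ n))

variable {f : T → E} {u v : T}

lemma edist_link_le_dyadicLinkIncrement (hπC : ∀ n t, π n t ∈ C n)
    (hπ : ∀ n t, edist t (π n t) ≤ D / 2 ^ n) (n : ℕ) (t : T) :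
    edist (f (π n t)) (f (π (n + 1) t)) ≤ dyadicLinkIncrement C D f n := by
  refine edist_le_maxIncrement (mem_union_left _ (hπC n t)) (mem_union_right _ (hπC _ t)) ?_
  calc edist (π n t) (π (n + 1) t) ≤ edist t (π n t) + edist t (π (n + 1) t) :=
        edist_triangle_left _ _ _
    _ ≤ D / 2 ^ n + D / 2 ^ n :=
        add_le_add (hπ n t) ((hπ _ t).trans (ENNReal.div_le_div_left (pow_le_pow_right₀
          one_le_two n.le_succ) D))
    _ ≤ 3 * (D / 2 ^ n) := by rw [← two_mul]; gcongr; norm_num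

lemma edist_le_dyadicLinkIncrement (hπC : ∀ n t, π n t ∈ C n)
    (hπ : ∀ n t, edist t (π n t) ≤ D / 2 ^ n) {n : ℕ} (huv : edist u v ≤ D / 2 ^ n) :
    edist (f (π n u)) (f (π n v)) ≤ dyadicLinkIncrement C D f n := by
  refine edist_le_maxIncrement (mem_union_left _ (hπC n u)) (mem_union_left _ (hπC n v)) ?_
  calc edist (π n u) (π n v) ≤ edist (π n u) u + edist u v + edist v (π n v) :=
        edist_triangle4 _ _ _ _
    _ ≤ D / 2 ^ n + D / 2 ^ n + D / 2 ^ n := by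
        rw [edist_comm (π n u)]
        gcongr
        exacts [hπ n u, hπ n v]
    _ = 3 * (D / 2 ^ n) := by ring

lemma edist_le_three_mul_tsum_dyadicLinkIncrement (hπC : ∀ n t, π n t ∈ C n)
    (hπ : ∀ n t, edist t (π n t) ≤ D / 2 ^ n) {m : ℕ} (huv : edist u v ≤ D / 2 ^ m)
    (hu : ∀ m, ⨅ k, edist (f u) (f (π (m + k) u)) = 0)
    (hv : ∀ m, ⨅ k, edist (f v) (f (π (m + k) v)) = 0) :
    edist (f u) (f v) ≤ 3 * ∑' i, dyadicLinkIncrement C D f (m + i) := by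
  have hchain : ∀ t, (∀ m, ⨅ k, edist (f t) (f (π (m + k) t)) = 0) →
      edist (f t) (f (π m t)) ≤ ∑' i, dyadicLinkIncrement C D f (m + i) := fun t ht =>
    edist_le_tsum_of_iInf_edist_eq_zero (x := fun k => f (π (m + k) t))
      (fun k => edist_link_le_dyadicLinkIncrement hπC hπ (m + k) t) (ht m)
  calc edist (f u) (f v)
      ≤ edist (f u) (f (π m u)) + edist (f (π m u)) (f (π m v)) + edist (f v) (f (π m v)) := by
        rw [edist_comm (f v)]
        exact edist_triangle4 _ _ _ _
    _ ≤ ∑' i, dyadicLinkIncrement C D f (m + i) + ∑' i, dyadicLinkIncrement C D f (m + i) +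
        ∑' i, dyadicLinkIncrement C D f (m + i) := by
        gcongr
        exacts [hchain u hu, (edist_le_dyadicLinkIncrement hπC hπ huv).trans
          (ENNReal.le_tsum (f := fun i => dyadicLinkIncrement C D f (m + i)) 0), hchain v hv]
    _ = 3 * ∑' i, dyadicLinkIncrement C D f (m + i) := by ring

lemma edist_div_rpow_le_of_dyadic_nets (hD : D ≠ ∞) (hπC : ∀ n t, π n t ∈ C n)
    (hπ : ∀ n t, edist t (π n t) ≤ D / 2 ^ n) (hβ : 0 < β) (huv : edist u v ≤ D)
    (hu : ∀ m, ⨅ k, edist (f u) (f (π (m + k) u)) = 0)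
    (hv : ∀ m, ⨅ k, edist (f v) (f (π (m + k) v)) = 0)
    (hzero : edist u v = 0 → edist (f u) (f v) = 0) :
    edist (f u) (f v) / edist u v ^ β ≤ 3 * 2 ^ β * (1 - (2 ^ β)⁻¹)⁻¹ / D ^ β *
      ⨆ n, (2 ^ β) ^ n * dyadicLinkIncrement C D f n := by
  set a : ℝ≥0∞ := 2 ^ β
  set S := ⨆ n, a ^ n * dyadicLinkIncrement C D f n
  rcases eq_or_ne (edist u v) 0 with h0 | h0
  · simp [h0, hzero h0, ENNReal.zero_rpow_of_pos hβ]
  have hD₀ : D ≠ 0 := ((pos_of_ne_zero h0).trans_le huv).ne'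
  obtain ⟨m, hm, hDm⟩ := ENNReal.exists_two_pow_mul_le_lt h0 hD huv
  have hscale : a⁻¹ ^ m ≤ 2 ^ β * edist u v ^ β / D ^ β := by
    rw [ENNReal.le_div_iff_mul_le (by simp [hD₀, hD]) (by simp [hD₀, hD])]
    calc a⁻¹ ^ m * D ^ β ≤ a⁻¹ ^ m * (2 ^ (m + 1) * edist u v) ^ β := by gcongr
      _ = (a⁻¹ * a) ^ m * 2 ^ β * edist u v ^ β := by
          rw [ENNReal.mul_rpow_of_nonneg _ _ hβ.le, ← ENNReal.rpow_pow_comm, pow_succ]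
          ring
      _ = 2 ^ β * edist u v ^ β := by
          rw [ENNReal.inv_mul_cancel (by positivity) (by finiteness), one_pow, one_mul]
  refine ENNReal.div_le_of_le_mul ?_
  calc edist (f u) (f v) ≤ 3 * ∑' i, dyadicLinkIncrement C D f (m + i) :=
        edist_le_three_mul_tsum_dyadicLinkIncrement hπC hπ
          (by rwa [ENNReal.le_div_iff_mul_le (by simp) (by simp), mul_comm]) hu hv
    _ ≤ 3 * (a⁻¹ ^ m * (1 - a⁻¹)⁻¹ * S) := by
        gcongr
        exact ENNReal.tsum_add_le_inv_pow_mul_iSup (by positivity) (by finiteness) _ m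
    _ ≤ 3 * (2 ^ β * edist u v ^ β / D ^ β * (1 - a⁻¹)⁻¹ * S) := by gcongr
    _ = 3 * 2 ^ β * (1 - a⁻¹)⁻¹ / D ^ β * S * edist u v ^ β := by
        simp only [div_eq_mul_inv]
        ring

lemma IsKolmogorovProcess.ae_iSup_edist_rpow_div_le (hX : IsKolmogorovProcess X P p q M)
    (hp : 0 < p) (hq : 0 < q) (hβ : 0 < β) (hD : D ≠ ∞) (hdiam : ∀ s t : T, edist s t ≤ D)
    (hπC : ∀ n t, π n t ∈ C n) (hπ : ∀ n t, edist t (π n t) ≤ D / 2 ^ n) (hT' : T'.Countable) :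
    ∀ᵐ ω ∂P, ⨆ s ∈ T', ⨆ t ∈ T', edist (X s ω) (X t ω) ^ p / edist s t ^ (β * p) ≤
      (3 * 2 ^ β * (1 - (2 ^ β)⁻¹)⁻¹ / D ^ β) ^ p *
        ∑' n, (2 ^ (β * p)) ^ n * dyadicLinkIncrement C D (X · ω) n ^ p := by
  have hscale : Tendsto (fun n : ℕ => D / 2 ^ n) atTop (𝓝 0) := by
    simpa [div_eq_mul_inv, ENNReal.inv_pow] using ENNReal.Tendsto.const_mul
      (ENNReal.tendsto_pow_atTop_nhds_zero_of_lt_one (r := 2⁻¹) (by norm_num)) (Or.inr hD)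
  have hconv : ∀ᵐ ω ∂P, ∀ t ∈ T', ∀ m, ⨅ k, edist (X t ω) (X (π (m + k) t) ω) = 0 := by
    refine (ae_ball_iff hT').2 fun t _ => ae_all_iff.2 fun m => hX.ae_iInf_edist_eq_zero hp hq ?_
    refine tendsto_of_tendsto_of_tendsto_of_le_of_le tendsto_const_nhds
      (hscale.comp (tendsto_add_atTop_nat m)) (fun _ => zero_le) fun k => ?_
    simpa [add_comm] using hπ (m + k) t
  filter_upwards [hconv, hX.ae_edist_eq_zero_of_edist_eq_zero hp hq hT'] with ω hconv hzero
  refine iSup₂_le fun s hs => iSup₂_le fun t ht => ?_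
  calc edist (X s ω) (X t ω) ^ p / edist s t ^ (β * p)
      = (edist (X s ω) (X t ω) / edist s t ^ β) ^ p := by
        rw [ENNReal.div_rpow_of_nonneg _ _ hp.le, ← ENNReal.rpow_mul]
    _ ≤ (3 * 2 ^ β * (1 - (2 ^ β)⁻¹)⁻¹ / D ^ β *
          ⨆ n, (2 ^ β) ^ n * dyadicLinkIncrement C D (X · ω) n) ^ p :=
        ENNReal.rpow_le_rpow (edist_div_rpow_le_of_dyadic_nets hD hπC hπ hβ (hdiam s t)
          (hconv s hs) (hconv t ht) (hzero s hs t ht)) hp.le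
    _ ≤ (3 * 2 ^ β * (1 - (2 ^ β)⁻¹)⁻¹ / D ^ β) ^ p *
          ∑' n, ((2 ^ β) ^ n * dyadicLinkIncrement C D (X · ω) n) ^ p := by
        rw [ENNReal.mul_rpow_of_nonneg _ _ hp.le]
        gcongr
        exact ENNReal.iSup_rpow_le_tsum_rpow _ hp
    _ = (3 * 2 ^ β * (1 - (2 ^ β)⁻¹)⁻¹ / D ^ β) ^ p *
          ∑' n, (2 ^ (β * p)) ^ n * dyadicLinkIncrement C D (X · ω) n ^ p := by
        simp_rw [ENNReal.mul_rpow_of_nonneg _ _ hp.le, ← ENNReal.rpow_mul_natCast,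
          ← ENNReal.rpow_mul, mul_right_comm β]

lemma IsKolmogorovProcess.lintegral_dyadicLinkIncrement_rpow_le
    (hX : IsKolmogorovProcess X P p q M) (hp : 0 < p) (hq : 0 ≤ q) {θ : ℝ} (hθ : θ ≤ 1)
    {A : ℕ} (hA : 2 * q + 2 ≤ θ * A) {N : ℝ≥0∞} {d : ℝ}
    (hC : ∀ n, (#(C n) : ℝ≥0∞) ≤ N * (2 ^ d) ^ n) (n : ℕ) :
    ∫⁻ ω, dyadicLinkIncrement C D (X · ω) n ^ p ∂P ≤
      2 ^ p * 2 ^ (A + 1) * 2 ^ (3 * q + 3) * (N * (1 + 2 ^ d)) ^ (1 + θ) * (3 * D) ^ q * M *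
        ((2 ^ d) ^ (1 + θ) / 2 ^ q) ^ n := by
  have hθ₀ : 0 ≤ 1 + θ := by
    have := pos_of_mul_pos_left (by linarith : 0 < θ * A) (Nat.cast_nonneg A)
    linarith
  have hcard : (#(C n ∪ C (n + 1)) : ℝ≥0∞) ≤ N * (1 + 2 ^ d) * (2 ^ d) ^ n :=
    calc (#(C n ∪ C (n + 1)) : ℝ≥0∞) ≤ #(C n) + #(C (n + 1)) := by
          exact_mod_cast Finset.card_union_le _ _
      _ ≤ N * (2 ^ d) ^ n + N * (2 ^ d) ^ (n + 1) := add_le_add (hC n) (hC (n + 1))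
      _ = N * (1 + 2 ^ d) * (2 ^ d) ^ n := by ring
  calc ∫⁻ ω, dyadicLinkIncrement C D (X · ω) n ^ p ∂P
      ≤ 2 ^ p * 2 ^ (A + 1) * 2 ^ (3 * q + 3) * #(C n ∪ C (n + 1)) ^ (1 + θ) * M *
          (3 * (D / 2 ^ n)) ^ q :=
        hX.lintegral_maxIncrement_rpow_le hp hq hθ hA _ _
    _ ≤ 2 ^ p * 2 ^ (A + 1) * 2 ^ (3 * q + 3) * (N * (1 + 2 ^ d) * (2 ^ d) ^ n) ^ (1 + θ) * M *
          (3 * (D / 2 ^ n)) ^ q := by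
        gcongr
    _ = _ := by
        rw [ENNReal.mul_rpow_of_nonneg _ _ hθ₀, ← ENNReal.rpow_pow_comm, mul_div_assoc',
          ENNReal.div_rpow_of_nonneg _ _ hq, ← ENNReal.rpow_pow_comm]
        simp only [div_eq_mul_inv, mul_pow, ENNReal.inv_pow]
        ring

theorem IsKolmogorovProcess.lintegral_iSup_edist_rpow_div_le (hX : IsKolmogorovProcess X P p q M)
    (hp : 0 < p) (hq : 0 < q) (hβ : 0 < β) {θ : ℝ} (hθ : θ ≤ 1) {A : ℕ}
    (hA : 2 * q + 2 ≤ θ * A) (hD : D ≠ ∞) (hdiam : ∀ s t : T, edist s t ≤ D)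
    (hπC : ∀ n t, π n t ∈ C n) (hπ : ∀ n t, edist t (π n t) ≤ D / 2 ^ n) {N : ℝ≥0∞} {d : ℝ}
    (hC : ∀ n, (#(C n) : ℝ≥0∞) ≤ N * (2 ^ d) ^ n) (hT' : T'.Countable) :
    ∫⁻ ω, ⨆ s ∈ T', ⨆ t ∈ T', edist (X s ω) (X t ω) ^ p / edist s t ^ (β * p) ∂P ≤
      M * ((3 * 2 ^ β * (1 - (2 ^ β)⁻¹)⁻¹ / D ^ β) ^ p * (2 ^ p * 2 ^ (A + 1) * 2 ^ (3 * q + 3)) *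
        (N * (1 + 2 ^ d)) ^ (1 + θ) * (3 * D) ^ q *
        (1 - 2 ^ (β * p + d * (1 + θ) - q))⁻¹) := by
  set K₀ := (3 * 2 ^ β * (1 - (2 ^ β)⁻¹)⁻¹ / D ^ β) ^ p
  set K := 2 ^ p * 2 ^ (A + 1) * 2 ^ (3 * q + 3) * (N * (1 + 2 ^ d)) ^ (1 + θ) * (3 * D) ^ q
    with hK
  set r : ℝ≥0∞ := (2 ^ d) ^ (1 + θ) / 2 ^ q with hr
  have hmeas : ∀ n, Measurable fun ω => dyadicLinkIncrement C D (X · ω) n ^ p := fun n =>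
    (hX.measurable_maxIncrement _ _).pow_const p
  have hratio : 2 ^ (β * p) * r = 2 ^ (β * p + d * (1 + θ) - q) := by
    rw [hr, ← ENNReal.rpow_mul, div_eq_mul_inv, ← ENNReal.rpow_neg,
      ← ENNReal.rpow_add _ _ two_ne_zero ofNat_ne_top,
      ← ENNReal.rpow_add _ _ two_ne_zero ofNat_ne_top, sub_eq_add_neg, add_assoc]
  calc ∫⁻ ω, ⨆ s ∈ T', ⨆ t ∈ T', edist (X s ω) (X t ω) ^ p / edist s t ^ (β * p) ∂P
      ≤ ∫⁻ ω, K₀ * ∑' n, (2 ^ (β * p)) ^ n * dyadicLinkIncrement C D (X · ω) n ^ p ∂P :=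
        lintegral_mono_ae (hX.ae_iSup_edist_rpow_div_le hp hq hβ hD hdiam hπC hπ hT')
    _ = K₀ * ∑' n, (2 ^ (β * p)) ^ n * ∫⁻ ω, dyadicLinkIncrement C D (X · ω) n ^ p ∂P := by
        simp_rw [← ENNReal.tsum_mul_left, ← mul_assoc]
        rw [lintegral_tsum fun n => ((hmeas n).const_mul _).aemeasurable]
        exact tsum_congr fun n => lintegral_const_mul _ (hmeas n)
    _ ≤ K₀ * ∑' n, (2 ^ (β * p)) ^ n * (K * M * r ^ n) := by
        gcongr with n
        exact hX.lintegral_dyadicLinkIncrement_rpow_le hp hq.le hθ hA hC n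
    _ = M * (K₀ * (2 ^ p * 2 ^ (A + 1) * 2 ^ (3 * q + 3)) * (N * (1 + 2 ^ d)) ^ (1 + θ) *
          (3 * D) ^ q * (1 - 2 ^ (β * p + d * (1 + θ) - q))⁻¹) := by
        rw [tsum_congr fun n => (by ring : (2 ^ (β * p)) ^ n * (K * M * r ^ n) =
          K * M * (2 ^ (β * p) * r) ^ n), ENNReal.tsum_mul_left, hratio, ENNReal.tsum_geometric,
          hK]
        ring

end Chaining

theorem kolmogorov_chentsov_inequality_general {T : Type*} [PseudoEMetricSpace T]
    {c : ℝ≥0} {d p q β : ℝ}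
    (hd : 0 < d) (hp : 0 < p) (hq : d < q)
    (hT : HasBoundedInternalCoveringNumber (Set.univ : Set T) c d)
    (hβ : β ∈ Set.Ioo 0 ((q - d) / p)) :
    ∃ L : ℝ≥0∞, L ≠ ∞ ∧
      ∀ (Ω E : Type*) [MeasurableSpace Ω] [PseudoEMetricSpace E]
        (P : Measure Ω), ∀ (_ : IsProbabilityMeasure P), ∀ (X : T → Ω → E) (M : ℝ≥0),
        IsKolmogorovProcess X P p q M →
        ∀ T' : Set T, T'.Countable →
          ∫⁻ ω, ⨆ (s) (_ : s ∈ T') (t) (_ : t ∈ T'),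
              edist (X s ω) (X t ω) ^ p / edist s t ^ (β * p) ∂P ≤ (M : ℝ≥0∞) * L := by
  classical
  obtain ⟨hβ₀, hβq⟩ := hβ
  have hq₀ : 0 < q := hd.trans hq
  have hdiam : ∀ s t : T, edist s t ≤ Metric.ediam (univ : Set T) := fun s t =>
    Metric.edist_le_ediam_of_mem (mem_univ s) (mem_univ t)
  rcases eq_or_ne (Metric.ediam (univ : Set T)) 0 with hD₀ | hD₀
  · exact ⟨0, zero_ne_top, fun Ω E _ _ P _ X M hX T' hT' =>
      (hX.lintegral_iSup_edist_rpow_div_eq_zero hp hq₀ hT' fun s _ t _ =>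
        nonpos_iff_eq_zero.1 (hD₀ ▸ hdiam s t)).trans_le zero_le⟩
  have hD := hT.ediam_ne_top hd
  set D := Metric.ediam (univ : Set T)
  obtain ⟨C, π, hπC, hπ, hC⟩ := hT.exists_dyadic_nets hd.le hD₀
  have hgap : 0 < q - d - β * p := by linarith [(lt_div_iff₀ hp).1 hβq]
  obtain ⟨θ, hθ₀, hθ₁, hθd⟩ : ∃ θ : ℝ, 0 < θ ∧ θ ≤ 1 ∧ d * θ < q - d - β * p :=
    ⟨min 1 ((q - d - β * p) / (2 * d)), lt_min one_pos (by positivity), min_le_left _ _,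
      (mul_le_mul_of_nonneg_left (min_le_right _ _) hd.le).trans_lt (by field_simp; linarith)⟩
  obtain ⟨A, hA⟩ := exists_nat_ge ((2 * q + 2) / θ)
  have hr : (2 : ℝ≥0∞) ^ (β * p + d * (1 + θ) - q) < 1 :=
    ENNReal.rpow_lt_one_of_one_lt_of_neg one_lt_two (by linarith)
  refine ⟨_, ?_, fun Ω E _ _ P _ X M hX T' hT' =>
    hX.lintegral_iSup_edist_rpow_div_le hp hq₀ hβ₀ hθ₁ ((div_le_iff₀' hθ₀).1 hA) hD hdiam hπC hπ
      hC hT'⟩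
  have hθ : 0 ≤ 1 + θ := by linarith
  have hsum : (1 - (2 ^ β : ℝ≥0∞)⁻¹)⁻¹ ≠ ∞ := ENNReal.inv_ne_top.2
    (tsub_pos_of_lt (ENNReal.inv_lt_one.2 (ENNReal.one_lt_rpow one_lt_two hβ₀))).ne'
  have hgeom := ENNReal.inv_ne_top.2 (tsub_pos_of_lt hr).ne'
  have hDβ : D ^ β ≠ 0 := by simp [hD₀, hD]
  have hDd : D ^ d ≠ 0 := by simp [hD₀, hD]
  finiteness

/-- **Kolmogorov–Chentsov inequality.** Let `T` be a pseudo-emetric space with bounded covering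
number with constant `c > 0` and exponent `d > 0`. For all exponents `p > 0`, `q > d` and every
`β ∈ (0, (q - d) / p)` there is a finite constant `L` (depending only on `T, c, d, p, q, β`) such
that for every process `X` with values in a pseudo-emetric space `E` satisfying the Kolmogorov
condition for `(p, q)` with constant `M`, and every countable `T' ⊆ T`,
`E[⨆ (s t ∈ T'), d_E(X s, X t) ^ p / d_T(s, t) ^ (β * p)] ≤ M * L`
(with the `ℝ≥0∞` convention `0 / 0 = 0`). -/
theorem kolmogorov_chentsov_inequality {T : Type*} [PseudoEMetricSpace T]
    {c : ℝ≥0} {d p q β : ℝ}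
    (hc : 0 < c) (hd : 0 < d) (hp : 0 < p) (hq : d < q)
    (hT : HasBoundedInternalCoveringNumber (Set.univ : Set T) c d)
    (hβ : β ∈ Set.Ioo 0 ((q - d) / p)) :
    ∃ L : ℝ≥0∞, L ≠ ∞ ∧
      ∀ (Ω E : Type*) [MeasurableSpace Ω] [PseudoEMetricSpace E]
        (P : Measure Ω), ∀ (_ : IsProbabilityMeasure P), ∀ (X : T → Ω → E) (M : ℝ≥0),
        IsKolmogorovProcess X P p q M →
        ∀ T' : Set T, T'.Countable →
          ∫⁻ ω, ⨆ (s) (_ : s ∈ T') (t) (_ : t ∈ T'),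
              edist (X s ω) (X t ω) ^ p / edist s t ^ (β * p) ∂P ≤ (M : ℝ≥0∞) * L :=
  kolmogorov_chentsov_inequality_general hd hp hq hT hβ
end

section
/- Pair reduction lemma: Let T be an extended pseudo-metric space, c ≥ 0, J a finite subset of T, a ≥ 0 and n ∈ ℕ such that |J| ≤ aⁿ. Then there exists a set K ⊆ J × J such that (1) |K| ≤ a·|J|; (2) for all (s, t) ∈ K, d_T(s, t) ≤ c·n; and (3) for every extended pseudo-metric space E and every map f : T → E, sup_{s,t ∈ J, d_T(s,t) ≤ c} d_E(f(s), f(t)) ≤ 2 · sup_{(s,t) ∈ K} d_E(f(s), f(t)). -/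
open ENNReal

open Classical in
/-- Auxiliary: `prBall c J x k` is the set of points of `J` reachable from `x` in at most `k`
steps of size `≤ c`. -/
noncomputable def prBall {T : Type*} [PseudoEMetricSpace T]
    (c : ℝ≥0∞) (J : Finset T) (x : T) : ℕ → Finset T
  | 0 => {x}
  | k + 1 => J.filter fun t => ∃ s ∈ prBall c J x k, edist s t ≤ c

open Classical in
lemma prBall_succ {T : Type*} [PseudoEMetricSpace T]
    (c : ℝ≥0∞) (J : Finset T) (x : T) (k : ℕ) :
    prBall c J x (k + 1) = J.filter fun t => ∃ s ∈ prBall c J x k, edist s t ≤ c := rfl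

lemma prBall_subset {T : Type*} [PseudoEMetricSpace T]
    {c : ℝ≥0∞} {J : Finset T} {x : T} (hx : x ∈ J) (k : ℕ) :
    prBall c J x k ⊆ J := by
  cases k with
  | zero => simpa [prBall] using hx
  | succ k => rw [prBall_succ]; exact Finset.filter_subset _ _

lemma prBall_subset_succ {T : Type*} [PseudoEMetricSpace T]
    {c : ℝ≥0∞} {J : Finset T} {x : T} (hx : x ∈ J) (k : ℕ) :
    prBall c J x k ⊆ prBall c J x (k + 1) := by
  classical
  intro t ht
  rw [prBall_succ, Finset.mem_filter]
  exact ⟨prBall_subset hx k ht, t, ht, by simp⟩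

lemma mem_prBall_self {T : Type*} [PseudoEMetricSpace T]
    {c : ℝ≥0∞} {J : Finset T} {x : T} (hx : x ∈ J) (k : ℕ) :
    x ∈ prBall c J x k := by
  induction k with
  | zero => simp [prBall]
  | succ k ih => exact prBall_subset_succ hx k ih

lemma prBall_edist_le {T : Type*} [PseudoEMetricSpace T]
    {c : ℝ≥0∞} {J : Finset T} {x : T} {k : ℕ} {t : T}
    (ht : t ∈ prBall c J x k) : edist x t ≤ c * k := by
  classical
  induction k generalizing t with
  | zero =>
    simp only [prBall, Finset.mem_singleton] at ht
    simp [ht]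
  | succ k ih =>
    rw [prBall_succ, Finset.mem_filter] at ht
    obtain ⟨-, s, hs, hst⟩ := ht
    calc edist x t ≤ edist x s + edist s t := edist_triangle _ _ _
      _ ≤ c * k + c := add_le_add (ih hs) hst
      _ = c * (k + 1 : ℕ) := by push_cast; ring

/-- Key growth lemma: some ball grows by a factor at most `a`. -/
lemma prBall_growth {T : Type*} [PseudoEMetricSpace T]
    {c : ℝ≥0∞} {J : Finset T} {x : T} {a : ℝ≥0∞} {n : ℕ}
    (hx : x ∈ J) (hn : n ≠ 0) (hJ : (J.card : ℝ≥0∞) ≤ a ^ n) :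
    ∃ k < n, ((prBall c J x (k + 1)).card : ℝ≥0∞) ≤ a * (prBall c J x k).card := by
  by_contra h
  push_neg at h
  have h' : ∀ k < n, a * (prBall c J x k).card < ((prBall c J x (k + 1)).card : ℝ≥0∞) := h
  have key : ∀ k ≤ n, a ^ k ≤ ((prBall c J x k).card : ℝ≥0∞) := by
    intro k hk
    induction k with
    | zero => simp [prBall]
    | succ k ih =>
      have hk' : k < n := Nat.lt_of_succ_le hk
      calc a ^ (k + 1) = a * a ^ k := by ring
        _ ≤ a * (prBall c J x k).card := mul_le_mul_right (ih hk'.le) a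
        _ ≤ ((prBall c J x (k + 1)).card : ℝ≥0∞) := (h' k hk').le
  obtain ⟨m, rfl⟩ := Nat.exists_eq_succ_of_ne_zero hn
  have hlt : a ^ (m + 1) < ((prBall c J x (m + 1)).card : ℝ≥0∞) := by
    calc a ^ (m + 1) = a * a ^ m := by ring
      _ ≤ a * (prBall c J x m).card := mul_le_mul_right (key m (Nat.le_succ m)) a
      _ < ((prBall c J x (m + 1)).card : ℝ≥0∞) := h' m (Nat.lt_succ_self m)
  have hle : ((prBall c J x (m + 1)).card : ℝ≥0∞) ≤ a ^ (m + 1) := by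
    refine le_trans ?_ hJ
    exact_mod_cast Finset.card_le_card (prBall_subset hx (m + 1))
  exact absurd (hlt.trans_le hle) (lt_irrefl _)

lemma edist_le_pairSup {T E : Type*} [PseudoEMetricSpace E] (f : T → E)
    (K : Finset (T × T)) {p : T × T} (hp : p ∈ K) :
    edist (f p.1) (f p.2) ≤ ⨆ (st) (_ : st ∈ K), edist (f st.1) (f st.2) :=
  le_iSup₂ (f := fun st (_ : st ∈ K) => edist (f st.1) (f st.2)) p hp

/-- **Pair reduction lemma.** Let `T` be a pseudo-emetric space, `c : ℝ≥0∞`, `J` a finite subset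
of `T`, `a : ℝ≥0∞` and `n : ℕ` with `|J| ≤ a ^ n`. Then there is a set `K ⊆ J × J` of pairs
such that `|K| ≤ a * |J|`, every pair in `K` is at distance at most `c * n`, and for every
pseudo-emetric space `E` and every map `f : T → E`, the supremum of `d_E (f s) (f t)` over
`s, t ∈ J` with `d_T s t ≤ c` is at most twice the supremum of `d_E (f s) (f t)` over
`(s, t) ∈ K`. -/
theorem pair_reduction {T : Type*} [PseudoEMetricSpace T]
    (c : ℝ≥0∞) (J : Finset T) (a : ℝ≥0∞) (n : ℕ) (hJ : (J.card : ℝ≥0∞) ≤ a ^ n) :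
    ∃ K : Finset (T × T), K ⊆ J ×ˢ J ∧
      (K.card : ℝ≥0∞) ≤ a * J.card ∧
      (∀ st ∈ K, edist st.1 st.2 ≤ c * n) ∧
      ∀ (E : Type*) [PseudoEMetricSpace E] (f : T → E),
        (⨆ (s) (_ : s ∈ J) (t) (_ : t ∈ J) (_ : edist s t ≤ c), edist (f s) (f t))
          ≤ 2 * ⨆ (st) (_ : st ∈ K), edist (f st.1) (f st.2) := by
  classical
  induction J using Finset.strongInduction with
  | _ J IH =>
  -- Case `n = 0` : `J` has at most one point.
  rcases Nat.eq_zero_or_pos n with hn | hn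
  · subst hn
    rw [pow_zero] at hJ
    have hcard : J.card ≤ 1 := by exact_mod_cast hJ
    refine ⟨∅, by simp, by simp, by simp, ?_⟩
    intro E _ f
    refine iSup_le fun s => iSup_le fun hs => iSup_le fun t => iSup_le fun ht =>
      iSup_le fun _ => ?_
    have : s = t := Finset.card_le_one.mp hcard s hs t ht
    simp [this]
  -- Case `J = ∅`.
  rcases Finset.eq_empty_or_nonempty J with rfl | ⟨x, hx⟩
  · refine ⟨∅, by simp, by simp, by simp, ?_⟩
    intro E _ f
    simp
  -- Main case: pick a ball around `x` that grows slowly.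
  obtain ⟨k, hkn, hgrow⟩ := prBall_growth hx (Nat.pos_iff_ne_zero.mp hn) hJ
  set C : Finset T := prBall c J x k with hC
  set H : Finset T := prBall c J x (k + 1) with hH
  have hCJ : C ⊆ J := prBall_subset hx k
  have hHJ : H ⊆ J := prBall_subset hx (k + 1)
  have hCH : C ⊆ H := prBall_subset_succ hx k
  have hxC : x ∈ C := mem_prBall_self hx k
  set J' : Finset T := J \ C with hJ'
  have hJ'ss : J' ⊂ J := Finset.sdiff_ssubset hCJ ⟨x, hxC⟩
  have hJ'card : (J'.card : ℝ≥0∞) ≤ a ^ n :=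
    le_trans (by exact_mod_cast Finset.card_le_card hJ'ss.subset) hJ
  obtain ⟨K', hK'sub, hK'card, hK'dist, hK'sup⟩ := IH J' hJ'ss hJ'card
  refine ⟨K' ∪ {x} ×ˢ H, ?_, ?_, ?_, ?_⟩
  · -- subset of J ×ˢ J
    refine Finset.union_subset (hK'sub.trans ?_) ?_
    · exact Finset.product_subset_product Finset.sdiff_subset Finset.sdiff_subset
    · intro p hp
      rw [Finset.mem_product] at hp ⊢
      exact ⟨by simpa using (Finset.mem_singleton.mp hp.1) ▸ hx, hHJ hp.2⟩
  · -- cardinality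
    have h1 : ((K' ∪ {x} ×ˢ H).card : ℝ≥0∞) ≤ (K'.card : ℝ≥0∞) + H.card := by
      calc ((K' ∪ {x} ×ˢ H).card : ℝ≥0∞) ≤ ((K'.card + ({x} ×ˢ H).card : ℕ) : ℝ≥0∞) := by
            exact_mod_cast Finset.card_union_le _ _
        _ = (K'.card : ℝ≥0∞) + (({x} ×ˢ H).card : ℝ≥0∞) := by push_cast; ring
        _ = (K'.card : ℝ≥0∞) + H.card := by simp
    have h2 : (J'.card : ℝ≥0∞) + C.card = (J.card : ℝ≥0∞) := by
      have := Finset.card_sdiff_add_card_eq_card hCJ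
      exact_mod_cast this
    calc ((K' ∪ {x} ×ˢ H).card : ℝ≥0∞) ≤ (K'.card : ℝ≥0∞) + H.card := h1
      _ ≤ a * J'.card + a * C.card := add_le_add hK'card hgrow
      _ = a * ((J'.card : ℝ≥0∞) + C.card) := by ring
      _ = a * J.card := by rw [h2]
  · -- distance bound
    intro st hst
    rcases Finset.mem_union.mp hst with h | h
    · exact hK'dist st h
    · rw [Finset.mem_product, Finset.mem_singleton] at h
      obtain ⟨h1, h2⟩ := h
      subst h1
      calc edist st.1 st.2 ≤ c * (k + 1 : ℕ) := prBall_edist_le h2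
        _ ≤ c * n := mul_le_mul_right (by exact_mod_cast hkn) c
  · -- the supremum bound
    intro E _ f
    set S : ℝ≥0∞ := ⨆ (st) (_ : st ∈ K' ∪ {x} ×ˢ H), edist (f st.1) (f st.2) with hS
    have hmemS : ∀ p ∈ K' ∪ {x} ×ˢ H, edist (f p.1) (f p.2) ≤ S := fun p hp =>
      edist_le_pairSup f _ hp
    refine iSup_le fun s => iSup_le fun hs => iSup_le fun t => iSup_le fun ht =>
      iSup_le fun hst => ?_
    by_cases hcase : s ∈ C ∨ t ∈ C
    · -- both s and t lie in H; connect through x.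
      have hmemH : s ∈ H ∧ t ∈ H := by
        rcases hcase with h | h
        · refine ⟨hCH h, ?_⟩
          rw [hH, prBall_succ, Finset.mem_filter]
          exact ⟨ht, s, h, hst⟩
        · refine ⟨?_, hCH h⟩
          rw [hH, prBall_succ, Finset.mem_filter]
          exact ⟨hs, t, h, by rwa [edist_comm]⟩
      have hxs : (x, s) ∈ K' ∪ {x} ×ˢ H := by
        refine Finset.mem_union_right _ ?_
        rw [Finset.mem_product]; exact ⟨Finset.mem_singleton_self x, hmemH.1⟩
      have hxt : (x, t) ∈ K' ∪ {x} ×ˢ H := by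
        refine Finset.mem_union_right _ ?_
        rw [Finset.mem_product]; exact ⟨Finset.mem_singleton_self x, hmemH.2⟩
      calc edist (f s) (f t) ≤ edist (f s) (f x) + edist (f x) (f t) := edist_triangle _ _ _
        _ = edist (f x) (f s) + edist (f x) (f t) := by rw [edist_comm]
        _ ≤ S + S := add_le_add (hmemS _ hxs) (hmemS _ hxt)
        _ = 2 * S := (two_mul S).symm
    · -- both s and t lie in J'; use the induction hypothesis.
      push_neg at hcase
      have hs' : s ∈ J' := Finset.mem_sdiff.mpr ⟨hs, hcase.1⟩
      have ht' : t ∈ J' := Finset.mem_sdiff.mpr ⟨ht, hcase.2⟩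
      have h1 : edist (f s) (f t) ≤
          ⨆ (s) (_ : s ∈ J') (t) (_ : t ∈ J') (_ : edist s t ≤ c), edist (f s) (f t) :=
        le_iSup_of_le s (le_iSup_of_le hs' (le_iSup_of_le t (le_iSup_of_le ht'
          (le_iSup_of_le hst le_rfl))))
      have h2 : (⨆ (st) (_ : st ∈ K'), edist (f st.1) (f st.2)) ≤ S :=
        iSup_le fun st => iSup_le fun h => hmemS st (Finset.mem_union_left _ h)
      calc edist (f s) (f t)
          ≤ ⨆ (s) (_ : s ∈ J') (t) (_ : t ∈ J') (_ : edist s t ≤ c), edist (f s) (f t) := h1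
        _ ≤ 2 * ⨆ (st) (_ : st ∈ K'), edist (f st.1) (f st.2) := hK'sup E f
        _ ≤ 2 * S := mul_le_mul_right h2 2
end
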